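/- arXiv:1007.2266 — 13 statements merged into one kernel-verified Lean document; each statement's English description precedes it below -/
import Mathlib

section
/- If there exists a strong splitting family, then the negative polarized partition relation holds: there is a coloring c : 𝔰 × ω → 2 such that for no A ⊆ 𝔰 with |A| = 𝔰 and no infinite B ⊆ ω is c constant on A × B. -/
open Cardinal Set

/-- `S` splits `B`: both `B ∩ S` and `B \ S` are infinite. -/
def Splits (S B : Set ℕ) : Prop := (B ∩ S).Infinite ∧ (B \ S).Infinite

/-- A family of subsets of `ℕ` is splitting if every infinite set is split by a member. -/
def IsSplittingFamily (F : Set (Set ℕ)) : Prop :=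
  ∀ B : Set ℕ, B.Infinite → ∃ S ∈ F, Splits S B

/-- The splitting number `𝔰`. -/
noncomputable def sNum : Cardinal :=
  sInf { κ | ∃ F : Set (Set ℕ), IsSplittingFamily F ∧ #F = κ }

/-- `A ⊆* B` : almost inclusion (inclusion modulo a finite set). -/
def AlmostSub (A B : Set ℕ) : Prop := (A \ B).Finite

/-- `F_B` : members of `F` almost containing `B` or almost containing it in the complement. -/
def FB (F : Set (Set ℕ)) (B : Set ℕ) : Set (Set ℕ) :=
  { S ∈ F | AlmostSub B S ∨ AlmostSub B Sᶜ }

/-- A strong splitting family: splitting, and `|F_B| < 𝔰` for all infinite `B`. -/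
def IsStrongSplitting (F : Set (Set ℕ)) : Prop :=
  IsSplittingFamily F ∧ ∀ B : Set ℕ, B.Infinite → #(FB F B) < sNum

/-- A very strong splitting family: splitting, and `|F_B| < |F|` for all infinite `B`. -/
def IsVeryStrongSplitting (F : Set (Set ℕ)) : Prop :=
  IsSplittingFamily F ∧ ∀ B : Set ℕ, B.Infinite → #(FB F B) < #F

/-- If a strong splitting family exists, then (𝔰,ω) ↛ (𝔰,ω)^{1,1}_2. -/
theorem strong_splitting_implies_neg_polarized
    (h : ∃ F : Set (Set ℕ), IsStrongSplitting F) :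
    ∃ c : sNum.ord.ToType → ℕ → Fin 2,
      ∀ A : Set sNum.ord.ToType, ∀ B : Set ℕ,
        #A = sNum → B.Infinite →
          ¬ ∃ i : Fin 2, ∀ a ∈ A, ∀ n ∈ B, c a n = i := by
  classical
  obtain ⟨F, hsplit, hstrong⟩ := h
  have hle : sNum ≤ #F := csInf_le' ⟨F, hsplit, rfl⟩
  have hmk : #(sNum.ord.ToType) = sNum := Cardinal.mk_ord_toType sNum
  have hne : Nonempty (sNum.ord.ToType ↪ F) := by
    rw [← Cardinal.le_def, hmk]; exact hle
  obtain ⟨g⟩ := hne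
  refine ⟨fun a n => if n ∈ (g a : Set ℕ) then 1 else 0, ?_⟩
  rintro A B hA hB ⟨i, hi⟩
  have hmem : ∀ a ∈ A, (g a : Set ℕ) ∈ FB F B := by
    intro a ha
    refine ⟨(g a).2, ?_⟩
    fin_cases i
    · right
      have hsub : B ⊆ ((g a : Set ℕ))ᶜ := by
        intro n hn
        have h1 := hi a ha n hn
        intro hmem'
        simp [hmem'] at h1
      have : B \ ((g a : Set ℕ))ᶜ = ∅ := Set.diff_eq_empty.mpr hsub
      show (B \ _).Finite
      rw [this]; exact Set.finite_empty
    · left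
      have hsub : B ⊆ (g a : Set ℕ) := by
        intro n hn
        have h1 := hi a ha n hn
        by_contra hmem'
        simp [hmem'] at h1
      have : B \ (g a : Set ℕ) = ∅ := Set.diff_eq_empty.mpr hsub
      show (B \ _).Finite
      rw [this]; exact Set.finite_empty
  have hinj : Function.Injective
      (fun a : A => (⟨(g a : Set ℕ), hmem a a.2⟩ : FB F B)) := by
    intro x y hxy
    simp only [Subtype.mk.injEq] at hxy
    exact Subtype.ext (g.injective (Subtype.ext hxy))
  have hcard := Cardinal.mk_le_of_injective hinj
  rw [hA] at hcard
  exact absurd (lt_of_le_of_lt hcard (hstrong B hB)) (lt_irrefl _)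
end

section
/- If there is no strong splitting family, then the positive polarized partition relation holds: for every coloring c : 𝔰 × ω → 2 there exist A ⊆ 𝔰 with |A| = 𝔰 and an infinite B ⊆ ω such that c is constant on A × B. -/
open Cardinal Set

/-! ### Auxiliary lemmas -/

lemma fin_two_eq_one_of_ne_zero {x : Fin 2} (h : x ≠ 0) : x = 1 := by
  fin_cases x <;> simp_all

lemma not_splits_iff {S B : Set ℕ} :
    ¬ Splits S B ↔ (B ∩ S).Finite ∨ (B \ S).Finite := by
  rw [Splits, not_and_or, Set.not_infinite, Set.not_infinite]

lemma notSplits_of_almost {S B C : Set ℕ} (h : ¬ Splits S C) (hBC : (B \ C).Finite) :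
    ¬ Splits S B := by
  rw [not_splits_iff] at h ⊢
  rcases h with h | h
  · refine Or.inl ((hBC.union h).subset ?_)
    rintro x ⟨hxB, hxS⟩
    by_cases hxC : x ∈ C
    · exact Or.inr ⟨hxC, hxS⟩
    · exact Or.inl ⟨hxB, hxC⟩
  · refine Or.inr ((hBC.union h).subset ?_)
    rintro x ⟨hxB, hxS⟩
    by_cases hxC : x ∈ C
    · exact Or.inr ⟨hxC, hxS⟩
    · exact Or.inl ⟨hxB, hxC⟩

lemma univ_isSplitting : IsSplittingFamily (Set.univ : Set (Set ℕ)) := by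
  intro B hB
  set f := hB.natEmbedding with hf
  refine ⟨Set.range (fun n => ((f (2 * n) : B) : ℕ)), trivial, ?_, ?_⟩
  · apply Set.infinite_of_injective_forall_mem
      (f := fun n => ((f (2 * n) : B) : ℕ))
    · intro a b hab
      have := f.injective (Subtype.coe_injective hab)
      omega
    · intro n
      exact ⟨(f (2 * n)).2, ⟨n, rfl⟩⟩
  · apply Set.infinite_of_injective_forall_mem
      (f := fun n => ((f (2 * n + 1) : B) : ℕ))
    · intro a b hab
      have := f.injective (Subtype.coe_injective hab)
      omega
    · intro n
      refine ⟨(f (2 * n + 1)).2, ?_⟩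
      rintro ⟨m, hm⟩
      have := f.injective (Subtype.coe_injective hm)
      omega

lemma sNum_le_of_splitting {F : Set (Set ℕ)} (hF : IsSplittingFamily F) : sNum ≤ #F :=
  csInf_le' ⟨F, hF, rfl⟩

lemma not_splitting_of_lt {F : Set (Set ℕ)} (hF : #F < sNum) : ¬ IsSplittingFamily F :=
  fun hs => absurd (sNum_le_of_splitting hs) (not_le.mpr hF)

/-- A family of size `< 𝔰` fails to split some infinite subset of any given infinite set. -/
lemma exists_nonsplit (G : Set (Set ℕ)) (hG : #G < sNum) (C : Set ℕ) (hC : C.Infinite) :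
    ∃ B : Set ℕ, B ⊆ C ∧ B.Infinite ∧ ∀ S ∈ G, ¬ Splits S B := by
  have hCcard : #C = #ℕ := by
    rw [Cardinal.mk_nat]
    have := hC.to_subtype
    exact le_antisymm (Set.Countable.le_aleph0 (Set.to_countable C)) (Cardinal.aleph0_le_mk C)
  obtain ⟨e⟩ := Cardinal.eq.1 hCcard
  set g : ℕ → ℕ := fun n => ((e.symm n : C) : ℕ) with hg
  have hginj : Function.Injective g := fun a b hab => by
    exact e.symm.injective (Subtype.coe_injective hab)
  have hgmem : ∀ n, g n ∈ C := fun n => (e.symm n).2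
  have hG' : #((fun S => g ⁻¹' S) '' G) < sNum := lt_of_le_of_lt Cardinal.mk_image_le hG
  have hns := not_splitting_of_lt hG'
  rw [IsSplittingFamily] at hns
  push_neg at hns
  obtain ⟨X, hX, hXns⟩ := hns
  refine ⟨g '' X, ?_, hX.image hginj.injOn, ?_⟩
  · rintro x ⟨n, _, rfl⟩
    exact hgmem n
  · intro S hS
    have hT := hXns (g ⁻¹' S) ⟨S, hS, rfl⟩
    rw [not_splits_iff] at hT ⊢
    rcases hT with hT | hT
    · left
      rw [← Set.image_inter_preimage g X S]
      exact hT.image g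
    · right
      rw [← Set.image_diff_preimage (f := g)]
      exact hT.image g

/-- Pseudo-intersection of a decreasing chain of infinite sets. -/
lemma exists_pseudo (C : ℕ → Set ℕ) (hinf : ∀ n, (C n).Infinite)
    (hchain : ∀ n, C (n + 1) ⊆ C n) :
    ∃ B : Set ℕ, B.Infinite ∧ ∀ n, (B \ C n).Finite := by
  have anti : Antitone C := antitone_nat_of_succ_le hchain
  have step : ∀ n a, ∃ b, b ∈ C (n + 1) ∧ a < b := by
    intro n a
    obtain ⟨b, hb, hab⟩ := (hinf (n + 1)).exists_gt a
    exact ⟨b, hb, hab⟩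
  choose f hf1 hf2 using step
  set g : ℕ → ℕ := fun n => Nat.rec (hinf 0).nonempty.choose (fun n ih => f n ih) n with hgdef
  have hgs : ∀ n, g (n + 1) = f n (g n) := fun n => rfl
  have hmono : StrictMono g := strictMono_nat_of_lt_succ (fun n => by
    rw [hgs]; exact hf2 n (g n))
  have hmem : ∀ n, g n ∈ C n := by
    intro n
    cases n with
    | zero => exact (hinf 0).nonempty.choose_spec
    | succ n => rw [hgs]; exact hf1 n (g n)
  refine ⟨Set.range g, Set.infinite_range_of_injective hmono.injective, ?_⟩
  intro n
  apply (Set.finite_Iio (g n)).subset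
  rintro x ⟨⟨m, rfl⟩, hx⟩
  have hmn : m < n := by
    by_contra hge
    exact hx (anti (not_lt.mp hge) (hmem m))
  exact hmono hmn

/-- `cf(𝔰) > ℵ₀` in the form we need: a countable union of sets of size `< 𝔰` has size `< 𝔰`. -/
lemma mk_iUnion_lt_sNum {α : Type} (D : ℕ → Set α) (hD : ∀ n, #(D n) < sNum) :
    #(⋃ n, D n) < sNum := by
  by_contra hle
  rw [not_lt] at hle
  have hne : {κ | ∃ F : Set (Set ℕ), IsSplittingFamily F ∧ #F = κ}.Nonempty :=
    ⟨_, Set.univ, univ_isSplitting, rfl⟩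
  obtain ⟨F, hFsp, hFcard⟩ := csInf_mem hne
  have hFcard' : #F = sNum := hFcard
  have hFs : #F ≤ #(⋃ n, D n) := hFcard' ▸ hle
  obtain ⟨j⟩ := (Cardinal.le_def _ _).1 hFs
  have hmemU : ∀ S : F, ∃ n, (j S : α) ∈ D n := fun S => Set.mem_iUnion.1 (j S).2
  choose t ht using hmemU
  set G : ℕ → Set (Set ℕ) := fun n => Subtype.val '' (t ⁻¹' {n}) with hGdef
  have hGsub : ∀ n, #(G n) < sNum := by
    intro n
    refine lt_of_le_of_lt ?_ (hD n)
    calc #(G n) ≤ #(t ⁻¹' {n} : Set F) := Cardinal.mk_image_le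
      _ ≤ #(D n) := by
        refine Cardinal.mk_le_of_injective
          (f := fun S : (t ⁻¹' {n} : Set F) =>
            (⟨(j S.1 : α), by have h2 : t S.1 = n := S.2; have h3 := ht S.1; rwa [h2] at h3⟩ : D n)) ?_
        intro a b hab
        have h1 : (j a.1 : α) = (j b.1 : α) := by simpa using congrArg Subtype.val hab
        exact Subtype.ext (j.injective (Subtype.coe_injective h1))
  have step : ∀ (n : ℕ) (Cs : Set ℕ), ∃ B : Set ℕ,
      Cs.Infinite → B ⊆ Cs ∧ B.Infinite ∧ ∀ S ∈ G n, ¬ Splits S B := by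
    intro n Cs
    by_cases hC : Cs.Infinite
    · obtain ⟨B, h1, h2, h3⟩ := exists_nonsplit (G n) (hGsub n) Cs hC
      exact ⟨B, fun _ => ⟨h1, h2, h3⟩⟩
    · exact ⟨∅, fun hc => absurd hc hC⟩
  choose pick hpick using step
  set R : ℕ → Set ℕ := fun n => Nat.rec (pick 0 Set.univ) (fun n ih => pick (n + 1) ih) n
    with hRdef
  have hRs : ∀ n, R (n + 1) = pick (n + 1) (R n) := fun n => rfl
  have key : ∀ n, (R n).Infinite ∧ ∀ S ∈ G n, ¬ Splits S (R n) := by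
    intro n
    induction n with
    | zero =>
      obtain ⟨_, h2, h3⟩ := hpick 0 Set.univ Set.infinite_univ
      exact ⟨h2, h3⟩
    | succ n ih =>
      obtain ⟨_, h2, h3⟩ := hpick (n + 1) (R n) ih.1
      rw [← hRs n] at h2 h3
      exact ⟨h2, h3⟩
  have hchain : ∀ n, R (n + 1) ⊆ R n := by
    intro n
    rw [hRs n]
    exact (hpick (n + 1) (R n) (key n).1).1
  obtain ⟨B, hBinf, hBfin⟩ := exists_pseudo R (fun n => (key n).1) hchain
  obtain ⟨S, hSF, hSsp⟩ := hFsp B hBinf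
  have hSG : S ∈ G (t ⟨S, hSF⟩) := ⟨⟨S, hSF⟩, rfl, rfl⟩
  exact notSplits_of_almost ((key _).2 S hSG) (hBfin _) hSsp

/-- If no strong splitting family exists, then (𝔰,ω) → (𝔰,ω)^{1,1}_2. -/
theorem no_strong_splitting_implies_pos_polarized
    (h : ¬ ∃ F : Set (Set ℕ), IsStrongSplitting F) :
    ∀ c : sNum.ord.ToType → ℕ → Fin 2,
      ∃ A : Set sNum.ord.ToType, ∃ B : Set ℕ, ∃ i : Fin 2,
        #A = sNum ∧ B.Infinite ∧ ∀ a ∈ A, ∀ n ∈ B, c a n = i := by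
  intro c
  have hκ : #(sNum.ord.ToType) = sNum := by rw [Cardinal.mk_toType, Cardinal.card_ord]
  set S : sNum.ord.ToType → Set ℕ := fun α => {n | c α n = 0} with hS
  set DB : Set ℕ → Set sNum.ord.ToType :=
    fun B => {α | AlmostSub B (S α) ∨ AlmostSub B (S α)ᶜ} with hDB
  have main : ∃ B : Set ℕ, B.Infinite ∧ sNum ≤ #(DB B) := by
    by_cases hsp : IsSplittingFamily (Set.range S)
    · have hnot : ¬ IsStrongSplitting (Set.range S) := fun hs => h ⟨_, hs⟩
      rw [IsStrongSplitting] at hnot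
      push_neg at hnot
      obtain ⟨B, hBinf, hBcard⟩ := hnot hsp
      refine ⟨B, hBinf, le_trans hBcard ?_⟩
      refine Cardinal.mk_le_of_surjective (f := fun α : (DB B) =>
        (⟨S α.1, ⟨α.1, rfl⟩, α.2⟩ : FB (Set.range S) B)) ?_
      rintro ⟨T, hTF, hTB⟩
      obtain ⟨α, rfl⟩ := hTF
      exact ⟨⟨α, hTB⟩, rfl⟩
    · rw [IsSplittingFamily] at hsp
      push_neg at hsp
      obtain ⟨B, hBinf, hB⟩ := hsp
      refine ⟨B, hBinf, ?_⟩
      have huniv : DB B = Set.univ := by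
        apply Set.eq_univ_of_forall
        intro α
        have hns := hB (S α) ⟨α, rfl⟩
        rw [not_splits_iff] at hns
        rcases hns with h1 | h1
        · exact Or.inr (by rw [AlmostSub, Set.diff_compl]; exact h1)
        · exact Or.inl h1
      rw [huniv, Cardinal.mk_univ, hκ]
  obtain ⟨B, hBinf, hBcard⟩ := main
  set P : Fin 2 → ℕ → Set sNum.ord.ToType :=
    fun i k => {α | ∀ n ∈ B, k ≤ n → c α n = i} with hP
  set U : ℕ → Set sNum.ord.ToType :=
    fun m => P (if Even m then 0 else 1) (m / 2) with hU
  have hUP : ∀ (i : Fin 2) (k : ℕ), ∃ m, U m = P i k := by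
    intro i k
    fin_cases i
    · refine ⟨2 * k, ?_⟩
      have he : Even (2 * k) := even_two_mul k
      have h2 : 2 * k / 2 = k := by omega
      simp only [hU, if_pos he, h2]
      rfl
    · refine ⟨2 * k + 1, ?_⟩
      have he : ¬ Even (2 * k + 1) := by rw [Nat.even_iff]; omega
      have h2 : (2 * k + 1) / 2 = k := by omega
      simp only [hU, if_neg he, h2]
      rfl
  have hcover : DB B ⊆ ⋃ m, U m := by
    intro α hα
    have hex : ∃ (i : Fin 2) (k : ℕ), α ∈ P i k := by
      rcases hα with h1 | h1
      · obtain ⟨k, hk⟩ := Set.Finite.bddAbove (h1 : (B \ S α).Finite)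
        refine ⟨0, k + 1, ?_⟩
        intro n hn hkn
        by_contra hne
        have hmem : n ∈ B \ S α := ⟨hn, hne⟩
        have := hk hmem
        omega
      · obtain ⟨k, hk⟩ := Set.Finite.bddAbove (h1 : (B \ (S α)ᶜ).Finite)
        refine ⟨1, k + 1, ?_⟩
        intro n hn hkn
        have hnS : n ∉ S α := by
          intro hmemS
          have hmem : n ∈ B \ (S α)ᶜ := ⟨hn, fun hc => hc hmemS⟩
          have := hk hmem
          omega
        exact fin_two_eq_one_of_ne_zero hnS
    obtain ⟨i, k, hik⟩ := hex
    obtain ⟨m, hm⟩ := hUP i k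
    exact Set.mem_iUnion.2 ⟨m, hm ▸ hik⟩
  have hA : ∃ m, sNum ≤ #(U m) := by
    by_contra hc
    push_neg at hc
    have hlt := mk_iUnion_lt_sNum U hc
    exact absurd (le_trans hBcard (Cardinal.mk_le_mk_of_subset hcover)) (not_le.mpr hlt)
  obtain ⟨m, hm⟩ := hA
  refine ⟨U m, B \ Set.Iio (m / 2), if Even m then 0 else 1, ?_, ?_, ?_⟩
  · exact le_antisymm ((Cardinal.mk_set_le _).trans_eq hκ) hm
  · exact hBinf.diff (Set.finite_Iio _)
  · intro a ha n hn
    exact ha n hn.1 (not_lt.mp hn.2)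
end

section
/- If 2^κ = κ⁺, then the negative polarized relation (κ⁺, κ) ↛ (κ⁺, κ)^{1,1}_2 holds: there exists a coloring c : κ⁺ × κ → 2 such that for no A ⊆ κ⁺ with |A| = κ⁺ and B ⊆ κ with |B| = κ is c constant on A × B. -/
open Cardinal Set

universe u

open Classical

lemma mk_Iio_toType_lt (κ : Cardinal.{u}) (x : κ.ord.ToType) : #(Set.Iio x) < κ := by
  have h : Cardinal.ord #(κ.ord.ToType) = @Ordinal.type κ.ord.ToType (· < ·) isWellOrder_lt := by
    rw [Cardinal.mk_ord_toType]
    exact (Ordinal.type_toType κ.ord).symm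
  have h1 := @Cardinal.card_typein_lt κ.ord.ToType (· < ·) isWellOrder_lt x h
  replace h1 : #{ y // y < x } < #κ.ord.ToType := h1
  rw [Cardinal.mk_ord_toType] at h1
  exact h1

/-- Injective system of distinct representatives for ≤ κ many sets of size κ. -/
lemma exists_inj_sdr {I Y : Type u} {κ : Cardinal.{u}} (hκ : ℵ₀ ≤ κ)
    (hI : #I ≤ κ) (T : I → Set Y) (hT : ∀ i, #(T i) = κ) :
    ∃ g : I → Y, Function.Injective g ∧ ∀ i, g i ∈ T i := by
  have hY0 : #(κ.ord.ToType) = κ := Cardinal.mk_ord_toType κ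
  obtain ⟨ι⟩ : Nonempty (I ↪ κ.ord.ToType) := by
    rw [← Cardinal.le_def, hY0]; exact hI
  set r : I → I → Prop := fun i j => ι i < ι j with hr
  have wf : WellFounded r := InvImage.wf ι (IsWellFounded.wf)
  have hsmall : ∀ i : I, #{j : I // r j i} < κ := by
    intro i
    have h1 : #{j : I // r j i} ≤ #(Set.Iio (ι i)) := by
      refine ⟨⟨fun p => ⟨ι p.1, p.2⟩, ?_⟩⟩
      intro p q hpq
      exact Subtype.ext (ι.injective (by simpa using congrArg Subtype.val hpq))
    exact lt_of_le_of_lt h1 (mk_Iio_toType_lt κ (ι i))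
  have key : ∀ (i : I) (ih : ∀ j, r j i → Y),
      (T i \ Set.range fun p : {j // r j i} => ih p.1 p.2).Nonempty := by
    intro i ih
    rw [Set.nonempty_iff_ne_empty]
    intro hemp
    rw [Set.diff_eq_empty] at hemp
    have h1 : #(T i) ≤ #(Set.range fun p : {j // r j i} => ih p.1 p.2) :=
      Cardinal.mk_le_mk_of_subset hemp
    have h2 : #(Set.range fun p : {j // r j i} => ih p.1 p.2) ≤ #{j : I // r j i} :=
      Cardinal.mk_range_le
    have := lt_of_le_of_lt (h1.trans h2) (hsmall i)
    rw [hT i] at this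
    exact lt_irrefl _ this
  let g : I → Y := wf.fix fun i ih => (key i ih).choose
  have hfix : ∀ i, g i = (key i fun j _ => g j).choose := fun i =>
    WellFounded.fix_eq wf _ i
  have hg : ∀ i, g i ∈ T i \ Set.range fun p : {j // r j i} => g p.1 := by
    intro i
    rw [hfix i]
    exact (key i fun j _ => g j).choose_spec
  refine ⟨g, ?_, fun i => (hg i).1⟩
  intro i j hij
  by_contra hne
  rcases lt_or_gt_of_ne (fun h : ι i = ι j => hne (ι.injective h)) with hlt | hlt
  · exact (hg j).2 ⟨⟨i, hlt⟩, hij⟩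
  · exact (hg i).2 ⟨⟨j, hlt⟩, hij.symm⟩

/-- A two-valued function non-constant on each of ≤ κ many sets of size κ. -/
lemma exists_nonconst_fun {I Y : Type u} {κ : Cardinal.{u}} (hκ : ℵ₀ ≤ κ)
    (hI : #I ≤ κ) (T : I → Set Y) (hT : ∀ i, #(T i) = κ) :
    ∃ f : Y → Fin 2, ∀ i, ∃ y ∈ T i, ∃ z ∈ T i, f y ≠ f z := by
  have hI2 : #(I × Fin 2) ≤ κ := by
    rw [Cardinal.mk_prod]
    simp only [Cardinal.mk_fin, Cardinal.lift_id', Cardinal.lift_natCast, Nat.cast_ofNat,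
      Cardinal.lift_ofNat]
    calc #I * 2 ≤ κ * κ :=
          mul_le_mul' hI (le_trans (by exact_mod_cast Cardinal.nat_lt_aleph0 2 |>.le) hκ)
      _ = κ := Cardinal.mul_eq_self hκ
  obtain ⟨g, hginj, hgmem⟩ := exists_inj_sdr hκ hI2 (fun p => T p.1) (fun p => hT p.1)
  refine ⟨fun y => if y ∈ Set.range (fun i : I => g (i, 1)) then 1 else 0, fun i => ?_⟩
  refine ⟨g (i, 0), hgmem (i, 0), g (i, 1), hgmem (i, 1), ?_⟩
  have h0 : (if g (i, 0) ∈ Set.range (fun i : I => g (i, 1)) then (1 : Fin 2) else 0) = 0 := by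
    rw [if_neg]
    rintro ⟨j, hj⟩
    have := hginj hj
    simp at this
  have h1 : (if g (i, 1) ∈ Set.range (fun i : I => g (i, 1)) then (1 : Fin 2) else 0) = 1 :=
    if_pos ⟨i, rfl⟩
  simp only [h0, h1]
  decide

/-- If 2^κ = κ⁺ then (κ⁺,κ) ↛ (κ⁺,κ)^{1,1}_2. -/
theorem gch_implies_neg_polarized (κ : Cardinal) (hκ : ℵ₀ ≤ κ)
    (h : 2 ^ κ = Order.succ κ) :
    ∃ c : (Order.succ κ).ord.ToType → κ.ord.ToType → Fin 2,
      ∀ A : Set (Order.succ κ).ord.ToType, ∀ B : Set κ.ord.ToType,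
        #A = Order.succ κ → #B = κ →
          ¬ ∃ i : Fin 2, ∀ a ∈ A, ∀ b ∈ B, c a b = i := by
  set lam := Order.succ κ with hlam
  set X := lam.ord.ToType
  set Y := κ.ord.ToType
  have hY : #Y = κ := Cardinal.mk_ord_toType κ
  have hX : #X = lam := Cardinal.mk_ord_toType lam
  have hSetY : #(Set Y) = lam := by rw [Cardinal.mk_set, hY, h]
  obtain ⟨e⟩ : Nonempty (X ≃ Set Y) := Cardinal.eq.mp (hX.trans hSetY.symm)
  -- cardinality of initial segments of X
  have hIic : ∀ a : X, #(Set.Iic a) ≤ κ := by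
    intro a
    have h1 : #(Set.Iio a) < lam := mk_Iio_toType_lt lam a
    have h2 : #(Set.Iio a) ≤ κ := Order.lt_succ_iff.mp h1
    have h3 : (Set.Iic a : Set X) = insert a (Set.Iio a) := by
      ext x; simp [le_iff_lt_or_eq, or_comm]
    rw [h3]
    calc #(insert a (Set.Iio a) : Set X) ≤ #(Set.Iio a) + 1 := Cardinal.mk_insert_le
      _ ≤ κ + κ := add_le_add h2 (le_trans (by exact_mod_cast Cardinal.nat_lt_aleph0 1 |>.le) hκ)
      _ = κ := Cardinal.add_eq_self hκ
  have H : ∀ a : X, ∃ f : Y → Fin 2, ∀ b : X, b ≤ a → #(e b : Set Y) = κ →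
      ∃ y ∈ (e b : Set Y), ∃ z ∈ (e b : Set Y), f y ≠ f z := by
    intro a
    set Ia : Set X := {b : X | b ≤ a ∧ #(e b : Set Y) = κ} with hIa
    have hIle : #Ia ≤ κ :=
      le_trans (Cardinal.mk_le_mk_of_subset (fun b hb => hb.1)) (hIic a)
    obtain ⟨f, hf⟩ := exists_nonconst_fun hκ hIle (fun b : Ia => (e b.1 : Set Y))
      (fun b => b.2.2)
    exact ⟨f, fun b hb1 hb2 => hf ⟨b, hb1, hb2⟩⟩
  choose f hf using H
  refine ⟨fun a y => f a y, ?_⟩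
  rintro A B hA hB ⟨i, hi⟩
  set b₀ : X := e.symm B with hb₀
  have heb₀ : (e b₀ : Set Y) = B := e.apply_symm_apply B
  have hAn : ¬ A ⊆ Set.Iic b₀ := by
    intro hsub
    have := le_trans (Cardinal.mk_le_mk_of_subset hsub) (hIic b₀)
    rw [hA] at this
    exact absurd this (not_le.mpr (Order.lt_succ κ))
  obtain ⟨a, haA, ha⟩ : ∃ a ∈ A, ¬ a ≤ b₀ := by
    by_contra hcon
    push_neg at hcon
    exact hAn hcon
  have hab : b₀ ≤ a := le_of_lt (not_le.mp ha)
  have hcard : #(e b₀ : Set Y) = κ := by rw [heb₀]; exact hB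
  obtain ⟨y, hy, z, hz, hyz⟩ := hf a b₀ hab hcard
  rw [heb₀] at hy hz
  exact hyz ((hi a haA y hy).trans (hi a haA z hz).symm)
end

section
/- Assuming the continuum hypothesis 2^{ℵ₀} = ℵ₁, there exists a strong splitting family of subsets of ω. -/
open Cardinal Set

/-- auxiliary increasing diagonal sequence -/
noncomputable def diagSeq (C : ℕ → Set ℕ) (hC : ∀ n, (C n).Infinite) (e : ℕ → ℕ) : ℕ → ℕ
  | 0 => ((hC (e 0)).exists_gt 0).choose
  | m + 1 => ((hC (e (m + 1))).exists_gt (diagSeq C hC e m)).choose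

lemma diagSeq_mem (C : ℕ → Set ℕ) (hC : ∀ n, (C n).Infinite) (e : ℕ → ℕ) (m : ℕ) :
    diagSeq C hC e m ∈ C (e m) := by
  cases m with
  | zero => exact ((hC (e 0)).exists_gt 0).choose_spec.1
  | succ m => exact ((hC (e (m + 1))).exists_gt (diagSeq C hC e m)).choose_spec.1

lemma diagSeq_strictMono (C : ℕ → Set ℕ) (hC : ∀ n, (C n).Infinite) (e : ℕ → ℕ) :
    StrictMono (diagSeq C hC e) := by
  apply strictMono_nat_of_lt_succ
  intro m
  exact ((hC (e (m + 1))).exists_gt (diagSeq C hC e m)).choose_spec.2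

/-- One set splitting countably many infinite sets. -/
lemma exists_splits_all (C : ℕ → Set ℕ) (hC : ∀ n, (C n).Infinite) :
    ∃ S : Set ℕ, ∀ n, Splits S (C n) := by
  classical
  let e : ℕ ≃ ℕ × ℕ := (Denumerable.eqv (ℕ × ℕ)).symm
  let g : ℕ → ℕ := diagSeq (fun n => C n) hC (fun m => (e m).1)
  have hg_mem : ∀ m, g m ∈ C (e m).1 := fun m => diagSeq_mem _ _ _ m
  have hg_mono : StrictMono g := diagSeq_strictMono _ _ _
  refine ⟨g '' {m | (e m).2 % 2 = 0}, fun n => ⟨?_, ?_⟩⟩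
  · apply infinite_of_injective_forall_mem (f := fun k : ℕ => g (e.symm (n, 2 * k)))
    · intro a b hab
      have := hg_mono.injective hab
      have := e.symm.injective this
      simpa using this
    · intro k
      constructor
      · have := hg_mem (e.symm (n, 2 * k))
        simpa using this
      · exact ⟨e.symm (n, 2 * k), by simp, rfl⟩
  · apply infinite_of_injective_forall_mem (f := fun k : ℕ => g (e.symm (n, 2 * k + 1)))
    · intro a b hab
      have := hg_mono.injective hab
      have := e.symm.injective this
      simpa using this
    · intro k
      constructor
      · have := hg_mem (e.symm (n, 2 * k + 1))
        simpa using this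
      · rintro ⟨m, hm, hgm⟩
        have : m = e.symm (n, 2 * k + 1) := hg_mono.injective hgm
        rw [this] at hm
        simp [Set.mem_setOf_eq] at hm

/-- the decreasing chain used to defeat a countable family -/
noncomputable def chain (f : ℕ → Set ℕ) : ℕ → Set ℕ
  | 0 => univ
  | n + 1 =>
      haveI := Classical.propDecidable
      if ((chain f n) ∩ f n).Infinite then chain f n ∩ f n else chain f n \ f n

lemma chain_infinite (f : ℕ → Set ℕ) (n : ℕ) : (chain f n).Infinite := by
  induction n with
  | zero => exact infinite_univ
  | succ n ih =>
      rw [chain]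
      split_ifs with h
      · exact h
      · have hfin : ((chain f n) ∩ f n).Finite := Set.not_infinite.mp h
        have := ih.diff hfin
        rwa [Set.diff_self_inter] at this
  
lemma chain_antitone (f : ℕ → Set ℕ) : ∀ m n, n ≤ m → chain f m ⊆ chain f n := by
  intro m
  induction m with
  | zero => intro n hn; interval_cases n; exact subset_rfl
  | succ m ih =>
      intro n hn
      rcases Nat.eq_or_lt_of_le hn with h | h
      · rw [h]
      · have h1 : chain f (m + 1) ⊆ chain f m := by
          rw [chain]; split_ifs <;> [exact inter_subset_left; exact diff_subset]
        exact h1.trans (ih n (Nat.lt_succ_iff.mp h))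

lemma chain_side (f : ℕ → Set ℕ) (n : ℕ) :
    chain f (n + 1) ⊆ f n ∨ chain f (n + 1) ⊆ (f n)ᶜ := by
  rw [chain]
  split_ifs with h
  · exact Or.inl inter_subset_right
  · exact Or.inr fun x hx => hx.2

/-- no countable splitting family -/
lemma aleph0_lt_sNum : ℵ₀ < sNum := by
  classical
  have hne : { κ | ∃ F : Set (Set ℕ), IsSplittingFamily F ∧ #F = κ }.Nonempty := by
    refine ⟨#(univ : Set (Set ℕ)), univ, ?_, rfl⟩
    intro B hB
    obtain ⟨S, hS⟩ := exists_splits_all (fun _ => B) (fun _ => hB)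
    exact ⟨S, mem_univ S, hS 0⟩
  have hmem := csInf_mem hne
  obtain ⟨F, hF, hcard⟩ := hmem
  rw [show sNum = #F from hcard.symm]
  by_contra hle
  push_neg at hle
  have hcount : F.Countable := by
    rw [← Set.countable_coe_iff]
    exact Cardinal.mk_le_aleph0_iff.mp hle
  -- F nonempty since it splits univ
  obtain ⟨S0, hS0, _⟩ := hF univ infinite_univ
  obtain ⟨f, hf⟩ := hcount.exists_eq_range ⟨S0, hS0⟩
  -- build diagonal set
  have hchain : ∀ n, (chain f n).Infinite := chain_infinite f
  let g : ℕ → ℕ := diagSeq (chain f) hchain id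
  have hg_mem : ∀ m, g m ∈ chain f m := fun m => diagSeq_mem _ _ _ m
  have hg_mono : StrictMono g := diagSeq_strictMono _ _ _
  have hBinf : (range g).Infinite := infinite_range_of_injective hg_mono.injective
  obtain ⟨S, hSF, hsplit⟩ := hF (range g) hBinf
  rw [hf] at hSF
  obtain ⟨n, rfl⟩ := hSF
  have hsubfin : ∀ (T : Set ℕ), chain f (n + 1) ⊆ T → (range g \ T).Finite := by
    intro T hT
    apply Set.Finite.subset ((Set.finite_Iio (n + 1)).image g)
    rintro x ⟨⟨m, rfl⟩, hx⟩
    refine ⟨m, ?_, rfl⟩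
    simp only [Set.mem_Iio]
    by_contra hm
    push_neg at hm
    exact hx (hT (chain_antitone f m (n + 1) hm (hg_mem m)))
  rcases chain_side f n with h | h
  · exact (hsplit.2 (hsubfin (f n) h)).elim
  · have : (range g \ (f n)ᶜ).Finite := hsubfin _ h
    rw [Set.diff_compl] at this
    exact hsplit.1 this

lemma infinite_sets_card (hCH : (2 : Cardinal.{0}) ^ ℵ₀ = aleph 1) :
    #({B : Set ℕ | B.Infinite}) = aleph 1 := by
  apply le_antisymm
  · calc #({B : Set ℕ | B.Infinite}) ≤ #(Set ℕ) := mk_set_le _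
      _ = 2 ^ ℵ₀ := by rw [mk_set, mk_nat]
      _ = aleph 1 := hCH
  · rw [← hCH, ← mk_nat, ← mk_set]
    -- inject Set ℕ into infinite sets
    refine ⟨⟨fun A => ⟨(fun n => 2 * n) '' A ∪ (fun n => 2 * n + 1) '' univ, ?_⟩, ?_⟩⟩
    · apply Set.Infinite.mono (Set.subset_union_right)
      apply infinite_of_injective_forall_mem (f := fun n : ℕ => 2 * n + 1)
      · intro a b; simp
      · intro n; exact ⟨n, mem_univ n, rfl⟩
    · intro A A' hAA'
      simp only [Subtype.mk_eq_mk] at hAA'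
      ext n
      constructor <;> intro hn
      · have h2n : (2 * n : ℕ) ∈ (fun n => 2 * n) '' A ∪ (fun n => 2 * n + 1) '' univ :=
          Or.inl ⟨n, hn, rfl⟩
        rw [hAA'] at h2n
        rcases h2n with ⟨m, hm, hmeq⟩ | ⟨m, _, hmeq⟩
        · have h' : 2 * m = 2 * n := hmeq
          have : m = n := by omega
          rwa [← this]
        · exact absurd (show 2 * m + 1 = 2 * n from hmeq) (by omega)
      · have h2n : (2 * n : ℕ) ∈ (fun n => 2 * n) '' A' ∪ (fun n => 2 * n + 1) '' univ :=
          Or.inl ⟨n, hn, rfl⟩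
        rw [← hAA'] at h2n
        rcases h2n with ⟨m, hm, hmeq⟩ | ⟨m, _, hmeq⟩
        · have h' : 2 * m = 2 * n := hmeq
          have : m = n := by omega
          rwa [← this]
        · exact absurd (show 2 * m + 1 = 2 * n from hmeq) (by omega)

/-- Under CH there exists a strong splitting family. -/
theorem ch_implies_strong_splitting (hCH : (2 : Cardinal) ^ ℵ₀ = aleph 1) :
    ∃ F : Set (Set ℕ), IsStrongSplitting F := by
  classical
  have hCH0 : (2 : Cardinal.{0}) ^ ℵ₀ = aleph 1 := by
    apply Cardinal.lift_injective
    rw [Cardinal.lift_two_power, Cardinal.lift_aleph0, Cardinal.lift_aleph, Ordinal.lift_one]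
    exact hCH
  clear hCH
  set O := (aleph 1).ord.ToType with hO
  have hcardO : #O = aleph 1 := by rw [hO, Cardinal.mk_toType, Cardinal.card_ord]
  have hI : #({B : Set ℕ | B.Infinite}) = aleph 1 := infinite_sets_card hCH0
  obtain ⟨φ⟩ : Nonempty (O ≃ {B : Set ℕ | B.Infinite}) := by
    rw [← Cardinal.eq]; rw [hcardO, hI]
  have hBinf : ∀ i : O, ((φ i : Set ℕ)).Infinite := fun i => (φ i).2
  -- for each i, the initial segment Iic i is countable & nonempty
  have hIic : ∀ i : O, (Set.Iic i).Countable := by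
    intro i
    have h1 : (Set.Iio i).Countable := by
      rw [countable_iff_lt_aleph_one]
      exact Cardinal.mk_Iio_ord_toType i
    have : Set.Iic i = insert i (Set.Iio i) := by rw [Set.Iio_insert]
    rw [this]
    exact h1.insert i
  -- choose enumeration and splitting set
  have key : ∀ i : O, ∃ S : Set ℕ, ∀ j : O, j ≤ i → Splits S (φ j : Set ℕ) := by
    intro i
    obtain ⟨f, hf⟩ := (hIic i).exists_eq_range ⟨i, Set.mem_Iic.mpr le_rfl⟩
    obtain ⟨S, hS⟩ := exists_splits_all (fun n => (φ (f n) : Set ℕ)) (fun n => hBinf _)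
    refine ⟨S, fun j hj => ?_⟩
    have : j ∈ range f := by rw [← hf]; exact hj
    obtain ⟨n, rfl⟩ := this
    exact hS n
  choose S hS using key
  refine ⟨range S, ?_, ?_⟩
  · intro B hB
    set i := φ.symm ⟨B, hB⟩ with hi
    have hφi : (φ i : Set ℕ) = B := by rw [hi, Equiv.apply_symm_apply]
    exact ⟨S i, ⟨i, rfl⟩, by rw [← hφi]; exact hS i i le_rfl⟩
  · intro B hB
    set i0 := φ.symm ⟨B, hB⟩ with hi0
    have hφi0 : (φ i0 : Set ℕ) = B := by rw [hi0, Equiv.apply_symm_apply]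
    have hsub : FB (range S) B ⊆ S '' (Set.Iio i0) := by
      rintro T ⟨⟨i, rfl⟩, hTB⟩
      refine ⟨i, ?_, rfl⟩
      simp only [Set.mem_Iio]
      by_contra hlt
      push_neg at hlt
      have hsp : Splits (S i) B := by rw [← hφi0]; exact hS i i0 hlt
      rcases hTB with h | h
      · exact hsp.2 h
      · rw [AlmostSub, Set.diff_compl] at h
        exact hsp.1 h
    have hcnt : (FB (range S) B).Countable := by
      apply Set.Countable.mono hsub
      apply Set.Countable.image
      rw [countable_iff_lt_aleph_one]
      exact Cardinal.mk_Iio_ord_toType i0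
    calc #(FB (range S) B) ≤ ℵ₀ := by
          rw [Cardinal.mk_le_aleph0_iff, ← Set.countable_coe_iff] at *
          exact hcnt
      _ < sNum := aleph0_lt_sNum
end

section
/- If a strong splitting family exists, then the strong splitting number 𝔰𝔰 equals the splitting number 𝔰. -/
open Cardinal Set

/-- The strong splitting number 𝔰𝔰. -/
noncomputable def ssNum : Cardinal :=
  sInf { κ | ∃ F : Set (Set ℕ), IsStrongSplitting F ∧ #F = κ }

/-- If a strong splitting family exists, then 𝔰𝔰 = 𝔰. -/
theorem ssNum_eq_sNum (h : ∃ F : Set (Set ℕ), IsStrongSplitting F) :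
    ssNum = sNum := by
  obtain ⟨F, hF⟩ := h
  apply le_antisymm
  · -- ssNum ≤ sNum : extract a subfamily of F of size sNum, it is strong splitting
    have hs : sNum ≤ #F := csInf_le' ⟨F, hF.1, rfl⟩
    obtain ⟨G, hGF, hG⟩ := Cardinal.le_mk_iff_exists_subset.mp hs
    have hGstrong : ∀ B : Set ℕ, B.Infinite → #(FB G B) < sNum := by
      intro B hB
      refine lt_of_le_of_lt ?_ (hF.2 B hB)
      apply Cardinal.mk_le_mk_of_subset
      intro S hS
      exact ⟨hGF hS.1, hS.2⟩
    have hGsplit : IsSplittingFamily G := by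
      intro B hB
      have hne : ¬ G ⊆ FB F B := by
        intro hsub
        have : #G ≤ #(FB F B) := Cardinal.mk_le_mk_of_subset hsub
        exact absurd (this.trans_lt (hF.2 B hB)) (by rw [hG]; exact lt_irrefl _)
      obtain ⟨S, hSG, hSnot⟩ := not_subset.mp hne
      refine ⟨S, hSG, ?_, ?_⟩
      · -- (B ∩ S).Infinite
        intro hfin
        apply hSnot
        refine ⟨hGF hSG, Or.inr ?_⟩
        show (B \ Sᶜ).Finite
        rwa [Set.diff_compl]
      · -- (B \ S).Infinite
        intro hfin
        exact hSnot ⟨hGF hSG, Or.inl hfin⟩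
    exact hG ▸ csInf_le' ⟨G, ⟨hGsplit, hGstrong⟩, rfl⟩
  · -- sNum ≤ ssNum
    refine le_csInf ⟨#F, F, hF, rfl⟩ ?_
    rintro κ ⟨G, hG, rfl⟩
    exact csInf_le' ⟨G, hG.1, rfl⟩
end

section
/- If a strong splitting family exists and 𝔰 = 2^{ℵ₀}, then 𝔰 is a regular cardinal. -/
open Cardinal Set

/-- If a strong splitting family exists and 𝔰 = 𝔠, then 𝔰 is regular. -/
theorem strong_splitting_s_eq_c_regular
    (h : ∃ F : Set (Set ℕ), IsStrongSplitting F)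
    (hc : sNum = 2 ^ ℵ₀) : sNum.IsRegular := by
  obtain ⟨F, hFsp, hFB⟩ := h
  have haleph : ℵ₀ ≤ sNum := by
    rw [hc]; exact (Cardinal.cantor ℵ₀).le
  have hs_le : ∀ G : Set (Set ℕ), IsSplittingFamily G → sNum ≤ #G := fun G hG =>
    csInf_le' ⟨G, hG, rfl⟩
  have hFcard : sNum ≤ #F := hs_le F hFsp
  by_cases hlim : ∀ c, c < sNum → Order.succ c < sNum
  · refine ⟨haleph, ?_⟩
    by_contra hncof
    have hcof : sNum.ord.cof < sNum := not_le.mp hncof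
    obtain ⟨ι, f, hlsub, hmk⟩ := Ordinal.exists_lsub_cof sNum.ord
    have hι : #ι < sNum := by rw [hmk]; exact hcof
    set κ : ι → Cardinal := fun i => (f i).card with hκdef
    have hκ : ∀ i, κ i < sNum := fun i =>
      Cardinal.lt_ord.mp (hlsub ▸ Ordinal.lt_lsub f i)
    have hsup : ∀ c, c < sNum → ∃ i, c < κ i := by
      intro c hcs
      have h1 : (Order.succ c).ord < Ordinal.lsub f := by
        rw [hlsub]; exact Cardinal.ord_lt_ord.mpr (hlim c hcs)
      obtain ⟨i, hi⟩ := Ordinal.lt_lsub_iff.mp h1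
      refine ⟨i, lt_of_lt_of_le (Order.lt_succ c) ?_⟩
      have h2 := Ordinal.card_le_card hi
      rwa [Cardinal.card_ord] at h2
    have hXle : #{B : Set ℕ // B.Infinite} ≤ Cardinal.sum κ := by
      have h1 : #{B : Set ℕ // B.Infinite} ≤ sNum := by
        rw [hc]
        calc #{B : Set ℕ // B.Infinite} ≤ #(Set ℕ) := Cardinal.mk_subtype_le _
          _ = 2 ^ ℵ₀ := by rw [Cardinal.mk_set, Cardinal.mk_nat]
      refine h1.trans (le_of_forall_lt ?_)
      intro c hcs
      obtain ⟨i, hi⟩ := hsup c hcs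
      exact hi.trans_le (Cardinal.le_sum κ i)
    have hsig : Cardinal.sum κ = #(Σ i, (κ i).out) := by
      rw [Cardinal.mk_sigma]
      exact congrArg Cardinal.sum (funext fun i => (Cardinal.mk_out (κ i)).symm)
    obtain ⟨e⟩ := (Cardinal.le_def _ _).mp (hXle.trans_eq hsig)
    set P : ι → Set {B : Set ℕ // B.Infinite} := fun j => {B | (e B).1 = j} with hPdef
    have hPle : ∀ j, #(P j) ≤ κ j := by
      intro j
      have h1 : #(P j) = #((fun B => (e B : Σ i, (κ i).out)) '' P j) :=
        (Cardinal.mk_image_eq e.injective).symm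
      have hr : ∀ x : Σ i, (κ i).out, x.1 = j → x ∈ Set.range (Sigma.mk j) := by
        rintro ⟨i', y⟩ rfl
        exact ⟨y, rfl⟩
      have h2 : ((fun B => (e B : Σ i, (κ i).out)) '' P j) ⊆ Set.range (Sigma.mk j) := by
        rintro x ⟨B, hB, rfl⟩
        exact hr _ hB
      calc #(P j) = _ := h1
        _ ≤ #(Set.range (Sigma.mk j)) := Cardinal.mk_le_mk_of_subset h2
        _ = #((κ j).out) := Cardinal.mk_range_eq _ sigma_mk_injective
        _ = κ j := Cardinal.mk_out _
    choose iB hiB using fun B : {B : Set ℕ // B.Infinite} => hsup _ (hFB B.1 B.2)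
    set C : ι → ι → Set {B : Set ℕ // B.Infinite} :=
      fun i j => {B | B ∈ P j ∧ iB B = i} with hCdef
    set U : ι → ι → Set (Set ℕ) := fun i j => ⋃ x ∈ C i j, FB F x.1 with hUdef
    have hUlt : ∀ i j, #(U i j) < sNum := by
      intro i j
      have h0 : U i j = ⋃ x : C i j, FB F x.1.1 := by
        rw [hUdef]; exact Set.biUnion_eq_iUnion _ _
      have h1 : #(U i j) ≤ Cardinal.sum fun x : C i j => #(FB F x.1.1) := by
        rw [h0]; exact Cardinal.mk_iUnion_le_sum_mk
      have h2 : (Cardinal.sum fun x : C i j => #(FB F x.1.1)) ≤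
          Cardinal.sum fun _ : C i j => κ i := by
        refine Cardinal.sum_le_sum _ _ ?_
        intro x
        have hx := hiB x.1
        rw [x.2.2] at hx
        exact hx.le
      have h3 : (Cardinal.sum fun _ : C i j => κ i) = #(C i j) * κ i :=
        Cardinal.sum_const' _ _
      have h4 : #(C i j) ≤ κ j :=
        le_trans (Cardinal.mk_le_mk_of_subset fun x hx => hx.1) (hPle j)
      calc #(U i j) ≤ _ := h1
        _ ≤ _ := h2
        _ = #(C i j) * κ i := h3
        _ ≤ κ j * κ i := mul_le_mul_left h4 _
        _ < sNum := Cardinal.mul_lt_of_lt haleph (hκ j) (hκ i)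
    have hSel : ∀ i j, ∃ S, S ∈ F ∧ S ∉ U i j := by
      intro i j
      by_contra hn
      push_neg at hn
      have hsub : F ⊆ U i j := fun S hS => hn S hS
      exact absurd (hFcard.trans (Cardinal.mk_le_mk_of_subset hsub))
        (not_le.mpr (hUlt i j))
    choose Sel hSelF hSelU using hSel
    set T : Set (Set ℕ) := Set.range fun p : ι × ι => Sel p.1 p.2 with hTdef
    have hTsp : IsSplittingFamily T := by
      intro B hB
      set B' : {B : Set ℕ // B.Infinite} := ⟨B, hB⟩ with hB'def
      refine ⟨Sel (iB B') (e B').1, ⟨(iB B', (e B').1), rfl⟩, ?_⟩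
      have hBC : B' ∈ C (iB B') (e B').1 := ⟨rfl, rfl⟩
      have hnot : Sel (iB B') (e B').1 ∉ FB F B := fun hmem =>
        hSelU _ _ (Set.mem_biUnion hBC hmem)
      have hnd : ¬(AlmostSub B (Sel (iB B') (e B').1) ∨
          AlmostSub B (Sel (iB B') (e B').1)ᶜ) :=
        fun hd => hnot ⟨hSelF _ _, hd⟩
      push_neg at hnd
      refine ⟨?_, hnd.1⟩
      rw [← Set.diff_compl]
      exact hnd.2
    have hTcard : #T < sNum := by
      calc #T ≤ #(ι × ι) := Cardinal.mk_range_le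
        _ = #ι * #ι := by rw [Cardinal.mk_prod]; simp [Cardinal.lift_id]
        _ < sNum := Cardinal.mul_lt_of_lt haleph hι hι
    exact absurd (hs_le T hTsp) (not_le.mpr hTcard)
  · push_neg at hlim
    obtain ⟨c, hc1, hc2⟩ := hlim
    have he : Order.succ c = sNum := le_antisymm (Order.succ_le_of_lt hc1) hc2
    have hcal : ℵ₀ ≤ c := by
      by_contra hn
      push_neg at hn
      obtain ⟨n, rfl⟩ := Cardinal.lt_aleph0.mp hn
      have hlt : sNum < ℵ₀ := by
        rw [← he, ← Cardinal.nat_succ]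
        exact Cardinal.nat_lt_aleph0 (n + 1)
      exact absurd haleph (not_le.mpr hlt)
    have hreg := Cardinal.isRegular_succ hcal
    rwa [he] at hreg
end

section
/- If a very strong splitting family exists and the very strong splitting number 𝔰𝔰' equals 2^{ℵ₀}, then 2^{ℵ₀} is a regular cardinal. -/
open Cardinal Set

/-- The very strong splitting number 𝔰𝔰'. -/
noncomputable def ssNum' : Cardinal :=
  sInf { κ | ∃ F : Set (Set ℕ), IsVeryStrongSplitting F ∧ #F = κ }

section Auxiliary

/-- Lifting regularity from `Cardinal.{0}` to an arbitrary universe. -/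
private lemma isRegular_lift {c : Cardinal.{0}} (h : c.IsRegular) :
    (Cardinal.lift.{u} c).IsRegular := by
  constructor
  · rw [← Cardinal.lift_aleph0.{u,0}]
    exact Cardinal.lift_le.mpr h.1
  · rw [← Cardinal.lift_ord, ← Ordinal.lift_cof]
    exact Cardinal.lift_le.mpr h.2

/-- The ordinal position of an element of `o.ToType`. -/
private noncomputable def tyi (o : Ordinal.{0}) (x : o.ToType) : Ordinal.{0} :=
  (@Ordinal.typein o.ToType (· < ·) isWellOrder_lt).toRelEmbedding x

private lemma tyi_lt_self (o : Ordinal.{0}) (x : o.ToType) : tyi o x < o :=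
  Ordinal.typein_lt_self x

private lemma tyi_lt_tyi (o : Ordinal.{0}) {x y : o.ToType} : tyi o x < tyi o y ↔ x < y :=
  @Ordinal.typein_lt_typein o.ToType (· < ·) isWellOrder_lt x y

private lemma mk_lt_eq_card (o : Ordinal.{0}) (x : o.ToType) :
    #{b : o.ToType // b < x} = (tyi o x).card :=
  @Ordinal.card_typein o.ToType (· < ·) isWellOrder_lt x

private lemma mk_Iio_toType_lt_s8 (c : Cardinal.{0}) (a : c.ord.ToType) :
    #{b : c.ord.ToType // b < a} < c := by
  rw [mk_lt_eq_card]
  exact Cardinal.lt_ord.mp (tyi_lt_self _ a)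

private lemma mk_Iic_toType_lt (c : Cardinal.{0}) (hc : ℵ₀ ≤ c) (a : c.ord.ToType) :
    #{b : c.ord.ToType // b ≤ a} < c := by
  classical
  have hj : Function.Injective (fun b : {b : c.ord.ToType // b ≤ a} =>
      if h : b.1 = a then (none : Option {b : c.ord.ToType // b < a})
      else some ⟨b.1, lt_of_le_of_ne b.2 h⟩) := by
    intro x y h
    by_cases hx : x.1 = a <;> by_cases hy : y.1 = a <;>
      simp only [hx, hy, dif_pos, dif_neg, not_false_iff] at h
    · exact Subtype.ext (hx.trans hy.symm)
    · cases h
    · cases h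
    · have h2 := Option.some_injective _ h
      simp only [Subtype.mk.injEq] at h2
      exact Subtype.ext h2
  calc #{b : c.ord.ToType // b ≤ a} ≤ #(Option {b : c.ord.ToType // b < a}) :=
        Cardinal.mk_le_of_injective hj
    _ = #{b : c.ord.ToType // b < a} + 1 := Cardinal.mk_option
    _ < c := Cardinal.add_lt_of_lt hc (mk_Iio_toType_lt_s8 c a)
        (lt_of_lt_of_le Cardinal.one_lt_aleph0 hc)

/-- There are at most `t.card` elements of `o.ToType` with position below `t`. -/
private lemma mk_tyi_lt_le (o : Ordinal.{0}) (t : Ordinal.{0}) (ht : t < o) :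
    #{x : o.ToType // tyi o x < t} ≤ t.card := by
  classical
  have htt : t < @Ordinal.type o.ToType (· < ·) isWellOrder_lt := by
    rw [Ordinal.type_toType]; exact ht
  set u : o.ToType := (@Ordinal.enum o.ToType (· < ·) isWellOrder_lt) ⟨t, htt⟩ with hu
  have hut : tyi o u = t := @Ordinal.typein_enum o.ToType (· < ·) isWellOrder_lt t htt
  have hiff : ∀ x : o.ToType, tyi o x < t ↔ x < u := by
    intro x
    rw [← hut, tyi_lt_tyi]
  have := Cardinal.mk_congr (Equiv.subtypeEquivRight hiff)
  rw [this, mk_lt_eq_card, hut]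

/-- A monotone cofinal filtration function below `κ.ord`. -/
private lemma exists_filtration_fun (κ : Cardinal.{0}) (haleκ : ℵ₀ ≤ κ) :
    ∃ t' : κ.ord.cof.ord.ToType → Ordinal.{0},
      (∀ a, t' a < κ.ord) ∧ (∀ b a, b ≤ a → t' b ≤ t' a) ∧ (∀ o < κ.ord, ∃ a, o < t' a) := by
  classical
  have hlinf : ℵ₀ ≤ κ.ord.cof := Ordinal.aleph0_le_cof.mpr (Cardinal.isSuccLimit_ord haleκ)
  obtain ⟨ι, f, hlsub, hι⟩ := Ordinal.exists_lsub_cof κ.ord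
  obtain ⟨eL⟩ : Nonempty (κ.ord.cof.ord.ToType ≃ ι) := Cardinal.eq.mp (by
    rw [Cardinal.mk_ord_toType, hι])
  have hglt : ∀ a : κ.ord.cof.ord.ToType, f (eL a) + 1 < κ.ord := by
    intro a
    have h1 : f (eL a) < κ.ord := by
      have h2 := Ordinal.lt_lsub f (eL a)
      rwa [hlsub] at h2
    have h3 := (Cardinal.isSuccLimit_ord haleκ).succ_lt h1
    rwa [← Ordinal.add_one_eq_succ] at h3
  refine ⟨fun a => ⨆ b : {b : κ.ord.cof.ord.ToType // b ≤ a}, f (eL b.1) + 1, ?_, ?_, ?_⟩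
  · intro a
    dsimp only
    refine Ordinal.iSup_lt_ord
      (f := fun b : {b : κ.ord.cof.ord.ToType // b ≤ a} => f (eL b.1) + 1)
      ?_ (fun b => hglt b.1)
    exact mk_Iic_toType_lt _ hlinf a
  · intro b a hba
    dsimp only
    have : Nonempty {x : κ.ord.cof.ord.ToType // x ≤ b} := ⟨⟨b, le_refl b⟩⟩
    apply ciSup_le
    intro x
    exact le_ciSup (Ordinal.bddAbove_range _) (⟨x.1, x.2.trans hba⟩ : {x // x ≤ a})
  · intro o ho
    rw [← hlsub] at ho
    obtain ⟨i, hi⟩ := Ordinal.lt_lsub_iff.mp ho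
    refine ⟨eL.symm i, lt_of_le_of_lt hi ?_⟩
    have h1 : f i < f (eL (eL.symm i)) + 1 := by
      simp only [Equiv.apply_symm_apply]
      exact Order.lt_succ _
    exact lt_of_lt_of_le h1
      (le_ciSup (Ordinal.bddAbove_range _) (⟨eL.symm i, le_refl _⟩ : {x // x ≤ eL.symm i}))

/-- There are continuum many infinite subsets of `ℕ`. -/
private lemma mk_infinite_sets : #{C : Set ℕ // C.Infinite} = 2 ^ ℵ₀ := by
  classical
  have hle : #{C : Set ℕ // C.Infinite} ≤ 2 ^ ℵ₀ := by
    calc #{C : Set ℕ // C.Infinite} ≤ #(Set ℕ) := Cardinal.mk_subtype_le _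
      _ = 2 ^ ℵ₀ := by rw [Cardinal.mk_set, Cardinal.mk_nat]
  refine le_antisymm hle ?_
  by_contra hlt
  push_neg at hlt
  have hfin : #{C : Set ℕ // C.Finite} ≤ ℵ₀ := by
    have : Countable {C : Set ℕ // C.Finite} := by
      have := Countable.setOf_finite (α := ℕ)
      exact this.to_subtype
    exact Cardinal.mk_le_aleph0
  set j : Set ℕ → ({C : Set ℕ // C.Finite} ⊕ {C : Set ℕ // C.Infinite}) := fun S =>
    if h : S.Finite then Sum.inl ⟨S, h⟩ else Sum.inr ⟨S, h⟩ with hj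
  have hjinj : Function.Injective j := by
    intro S S' h
    by_cases h1 : S.Finite <;> by_cases h2 : S'.Finite <;>
      simp only [hj, h1, h2, dif_pos, dif_neg, not_false_iff] at h <;>
      first
        | exact congrArg Subtype.val (Sum.inl.inj h)
        | exact congrArg Subtype.val (Sum.inr.inj h)
        | cases h
  have h1 : (2 : Cardinal) ^ ℵ₀ ≤ ℵ₀ + #{C : Set ℕ // C.Infinite} := by
    calc (2 : Cardinal) ^ ℵ₀ = #(Set ℕ) := by rw [Cardinal.mk_set, Cardinal.mk_nat]
      _ ≤ #({C : Set ℕ // C.Finite} ⊕ {C : Set ℕ // C.Infinite}) :=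
          Cardinal.mk_le_of_injective hjinj
      _ = #{C : Set ℕ // C.Finite} + #{C : Set ℕ // C.Infinite} := by
          rw [Cardinal.mk_sum, Cardinal.lift_id, Cardinal.lift_id]
      _ ≤ ℵ₀ + #{C : Set ℕ // C.Infinite} := add_le_add_left hfin _
  have h2 : ℵ₀ + #{C : Set ℕ // C.Infinite} < 2 ^ ℵ₀ :=
    Cardinal.add_lt_of_lt (Cardinal.cantor ℵ₀).le (Cardinal.cantor ℵ₀) hlt
  exact absurd h1 (not_le.mpr h2)

/-- A member of `F` not deciding `B` splits `B`. -/
private lemma splits_of_not_mem_FB {F : Set (Set ℕ)} {S B : Set ℕ}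
    (hSF : S ∈ F) (hS : S ∉ FB F B) : Splits S B := by
  have h1 : ¬ (AlmostSub B S ∨ AlmostSub B Sᶜ) := fun h => hS ⟨hSF, h⟩
  push_neg at h1
  constructor
  · have h2 := h1.2
    rw [AlmostSub, Set.diff_compl] at h2
    exact h2
  · exact h1.1

end Auxiliary


private lemma key_regular
    (h : ∃ F : Set (Set ℕ), IsVeryStrongSplitting F)
    (hc : ssNum' = 2 ^ ℵ₀) : ((2 : Cardinal.{0}) ^ ℵ₀).IsRegular := by
  classical
  by_contra hreg
  -- the continuum
  set κ : Cardinal.{0} := 2 ^ ℵ₀ with hκ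
  have haleκ : ℵ₀ ≤ κ := (Cardinal.cantor ℵ₀).le
  have hlk : κ.ord.cof < κ := by
    by_contra hge
    exact hreg ⟨haleκ, not_lt.mp hge⟩
  have hlinf : ℵ₀ ≤ κ.ord.cof := Ordinal.aleph0_le_cof.mpr (Cardinal.isSuccLimit_ord haleκ)
  -- a very strong splitting family of size κ
  have hne : { c | ∃ F : Set (Set ℕ), IsVeryStrongSplitting F ∧ #F = c }.Nonempty := by
    obtain ⟨F, hF⟩ := h
    exact ⟨#F, F, hF, rfl⟩
  have hmem : ssNum' ∈ { c | ∃ F : Set (Set ℕ), IsVeryStrongSplitting F ∧ #F = c } :=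
    csInf_mem hne
  obtain ⟨F, hF, hFc⟩ := hmem
  rw [hc] at hFc
  have hv : ∀ C : Set ℕ, C.Infinite → #(FB F C) < κ := by
    intro C hC
    have := hF.2 C hC
    rwa [hFc] at this
  -- the filtration
  obtain ⟨t', ht'lt, ht'mono, ht'cof⟩ := exists_filtration_fun κ haleκ
  -- enumerate the infinite sets by positions in κ.ord.ToType
  obtain ⟨eX⟩ : Nonempty ({C : Set ℕ // C.Infinite} ≃ κ.ord.ToType) := by
    refine Cardinal.eq.mp ?_
    rw [Cardinal.mk_ord_toType, mk_infinite_sets]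
  -- the handled families
  set H : κ.ord.cof.ord.ToType → Set {C : Set ℕ // C.Infinite} := fun a =>
    {C | tyi κ.ord (eX C) < t' a ∧ #(FB F C.1) ≤ (t' a).card} with hH
  have hHcard : ∀ a, #(H a) < κ := by
    intro a
    have hinj : Function.Injective
        (fun C : ↥(H a) => (⟨eX C.1, C.2.1⟩ : {x : κ.ord.ToType // tyi κ.ord x < t' a})) := by
      intro C D hCD
      simp only [Subtype.mk.injEq] at hCD
      exact Subtype.ext (eX.injective hCD)
    calc #(H a) ≤ #{x : κ.ord.ToType // tyi κ.ord x < t' a} := Cardinal.mk_le_of_injective hinj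
      _ ≤ (t' a).card := mk_tyi_lt_le κ.ord (t' a) (ht'lt a)
      _ < κ := Cardinal.lt_ord.mp (ht'lt a)
  -- the bad unions
  have hU : ∀ a, #(⋃ C : ↥(H a), FB F C.1.1) < κ := by
    intro a
    have hsup : (⨆ C : ↥(H a), #(FB F C.1.1)) ≤ (t' a).card := by
      rcases isEmpty_or_nonempty ↥(H a) with hE | hNE
      · rw [ciSup_of_empty]
        exact zero_le
      · exact ciSup_le fun C => C.2.2
    calc #(⋃ C : ↥(H a), FB F C.1.1) ≤ #(↥(H a)) * ⨆ C : ↥(H a), #(FB F C.1.1) :=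
          Cardinal.mk_iUnion_le _
      _ ≤ #(↥(H a)) * (t' a).card := mul_le_mul_right hsup _
      _ < κ := Cardinal.mul_lt_of_lt haleκ (hHcard a) (Cardinal.lt_ord.mp (ht'lt a))
  -- a partition of F into cof-many fibers of size κ
  obtain ⟨eF⟩ : Nonempty (↥F ≃ (κ.ord.cof.ord.ToType × κ.ord.ToType)) := by
    refine Cardinal.eq.mp ?_
    rw [hFc, Cardinal.mk_prod, Cardinal.lift_id, Cardinal.lift_id,
      Cardinal.mk_ord_toType, Cardinal.mk_ord_toType]
    exact (Cardinal.mul_eq_right haleκ hlk.le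
      (ne_of_gt (lt_of_lt_of_le Cardinal.aleph0_pos hlinf))).symm
  -- choose the splitters
  have hY : ∀ a, ∃ z : ↥F, (eF z).1 = a ∧ (z : Set ℕ) ∉ ⋃ C : ↥(H a), FB F C.1.1 := by
    intro a
    by_contra hno
    push_neg at hno
    have hinj : Function.Injective (fun z : {z : ↥F // (eF z).1 = a} =>
        (⟨(z.1 : Set ℕ), hno z.1 z.2⟩ : ↥(⋃ C : ↥(H a), FB F C.1.1))) := by
      intro z w hzw
      simp only [Subtype.mk.injEq] at hzw
      exact Subtype.ext (Subtype.ext hzw)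
    have hfib : #{z : ↥F // (eF z).1 = a} = κ := by
      have e2 : {z : ↥F // (eF z).1 = a} ≃ {p : κ.ord.cof.ord.ToType × κ.ord.ToType // p.1 = a} :=
        eF.subtypeEquiv (fun z => Iff.rfl)
      have e3 : {p : κ.ord.cof.ord.ToType × κ.ord.ToType // p.1 = a} ≃ κ.ord.ToType :=
        { toFun := fun p => p.1.2
          invFun := fun t => ⟨(a, t), rfl⟩
          left_inv := by
            rintro ⟨⟨x, t⟩, hx⟩
            simp only at hx
            subst hx
            rfl
          right_inv := fun t => rfl }
      rw [Cardinal.mk_congr (e2.trans e3), Cardinal.mk_ord_toType]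
    have := Cardinal.mk_le_of_injective hinj
    rw [hfib] at this
    exact absurd (lt_of_le_of_lt this (hU a)) (lt_irrefl κ)
  choose y hy1 hy2 using hY
  have hyinj : Function.Injective (fun a => ((y a : Set ℕ))) := by
    intro a b hab
    have : y a = y b := Subtype.coe_injective hab
    rw [← hy1 a, ← hy1 b, this]
  -- the small very strong splitting family
  set G : Set (Set ℕ) := Set.range (fun a => ((y a : Set ℕ))) with hG
  have hGF : G ⊆ F := by
    rintro _ ⟨a, rfl⟩
    exact (y a).2
  have hGcard : #G = κ.ord.cof := by
    rw [hG, Cardinal.mk_range_eq _ hyinj, Cardinal.mk_ord_toType]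
  -- every infinite set is handled from some point on
  have hhandled : ∀ (C : Set ℕ) (hC : C.Infinite), ∃ a₂, ∀ a, a₂ ≤ a →
      (⟨C, hC⟩ : {C : Set ℕ // C.Infinite}) ∈ H a := by
    intro C hC
    obtain ⟨a₁, ha₁⟩ := ht'cof (tyi κ.ord (eX ⟨C, hC⟩)) (tyi_lt_self κ.ord _)
    have hvC : (#(FB F C)).ord < κ.ord := Cardinal.ord_lt_ord.mpr (hv C hC)
    obtain ⟨a₀, ha₀⟩ := ht'cof (#(FB F C)).ord hvC
    refine ⟨max a₀ a₁, fun a ha => ?_⟩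
    constructor
    · exact lt_of_lt_of_le ha₁ (ht'mono _ _ (le_trans (le_max_right a₀ a₁) ha))
    · have h1 : (#(FB F C)).ord ≤ t' a := le_of_lt
        (lt_of_lt_of_le ha₀ (ht'mono _ _ (le_trans (le_max_left a₀ a₁) ha)))
      have h2 := Ordinal.card_le_card h1
      rwa [Cardinal.card_ord] at h2
  -- members of G beyond the handling point split C
  have hsplits : ∀ (C : Set ℕ) (hC : C.Infinite) (a : κ.ord.cof.ord.ToType),
      (⟨C, hC⟩ : {C : Set ℕ // C.Infinite}) ∈ H a → Splits ((y a : Set ℕ)) C := by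
    intro C hC a hmem
    refine splits_of_not_mem_FB (y a).2 ?_
    intro hbad
    exact hy2 a (Set.mem_iUnion.mpr ⟨⟨⟨C, hC⟩, hmem⟩, hbad⟩)
  have hGsplit : IsSplittingFamily G := by
    intro C hC
    obtain ⟨a₂, ha₂⟩ := hhandled C hC
    exact ⟨(y a₂ : Set ℕ), ⟨a₂, rfl⟩, hsplits C hC a₂ (ha₂ a₂ (le_refl _))⟩
  have hGdec : ∀ C : Set ℕ, C.Infinite → #(FB G C) < #G := by
    intro C hC
    obtain ⟨a₂, ha₂⟩ := hhandled C hC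
    have hsub : FB G C ⊆ (fun a => ((y a : Set ℕ))) '' {a | a < a₂} := by
      intro S hS
      obtain ⟨a, rfl⟩ := hS.1
      refine ⟨a, ?_, rfl⟩
      by_contra hax
      have ha : a₂ ≤ a := not_lt.mp hax
      have := hsplits C hC a (ha₂ a ha)
      -- y a splits C, but S = y a decides C
      rcases hS.2 with hdec | hdec
      · exact absurd hdec (fun hfin => this.2 hfin)
      · have h3 := this.1
        rw [AlmostSub, Set.diff_compl] at hdec
        exact absurd hdec (fun hfin => h3 hfin)
    calc #(FB G C) ≤ #((fun a => ((y a : Set ℕ))) '' {a | a < a₂}) :=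
          Cardinal.mk_le_mk_of_subset hsub
      _ ≤ #{a // a < a₂} := Cardinal.mk_image_le
      _ < κ.ord.cof := mk_Iio_toType_lt_s8 κ.ord.cof a₂
      _ = #G := hGcard.symm
  -- contradiction with minimality
  have hGvss : IsVeryStrongSplitting G := ⟨hGsplit, hGdec⟩
  have hssle : ssNum' ≤ κ.ord.cof :=
    csInf_le (OrderBot.bddBelow _) ⟨G, hGvss, hGcard⟩
  rw [hc] at hssle
  exact absurd (lt_of_le_of_lt hssle hlk) (lt_irrefl κ)


/-- If a very strong splitting family exists and 𝔰𝔰' = 𝔠, then 𝔠 is regular. -/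
theorem very_strong_splitting_c_regular
    (h : ∃ F : Set (Set ℕ), IsVeryStrongSplitting F)
    (hc : ssNum' = 2 ^ ℵ₀) : ((2 : Cardinal) ^ ℵ₀).IsRegular := by
  have hlift : ((2 : Cardinal) ^ ℵ₀) = Cardinal.lift ((2 : Cardinal.{0}) ^ ℵ₀) := by
    rw [Cardinal.lift_power, Cardinal.lift_aleph0, Cardinal.lift_two]
  rw [hlift]
  exact isRegular_lift (key_regular h hc)
end

section
/- If cov(𝔰, 𝔰, 𝔰, 2) > 2^{ℵ₀}, then there is no strong splitting family. -/
open Cardinal Set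

/-- The covering number cov(λ, μ, θ, 2). -/
noncomputable def covNum (lam mu th : Cardinal) : Cardinal :=
  sInf { c | ∃ P : Set (Set lam.ord.ToType), #P = c ∧ (∀ a ∈ P, #a < mu) ∧
    ∀ X : Set lam.ord.ToType, #X < th → ∃ a ∈ P, X ⊆ a }

/-- If cov(𝔰,𝔰,𝔰,2) > 𝔠 then there is no strong splitting family. -/
theorem cov_large_no_strong_splitting
    (h : 2 ^ ℵ₀ < covNum sNum sNum sNum) :
    ¬ ∃ F : Set (Set ℕ), IsStrongSplitting F := by
  rintro ⟨F, hsplit, hstrong⟩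
  have hsF : sNum ≤ #F := csInf_le' ⟨F, hsplit, rfl⟩
  obtain ⟨F₀, hF₀F, hF₀card⟩ := Cardinal.le_mk_iff_exists_subset.mp hsF
  have hcard : #F₀ = #(sNum.ord.ToType) := by
    rw [hF₀card, Cardinal.mk_ord_toType]
  obtain ⟨e⟩ := Cardinal.eq.mp hcard
  set a : Set ℕ → Set sNum.ord.ToType :=
    fun B => e '' {x : F₀ | (x : Set ℕ) ∈ FB F B} with ha
  set P : Set (Set sNum.ord.ToType) := a '' {B | B.Infinite} with hP
  have hPcard : #P ≤ 2 ^ ℵ₀ := by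
    calc #P ≤ #{B : Set ℕ | B.Infinite} := Cardinal.mk_image_le
    _ ≤ #(Set ℕ) := Cardinal.mk_set_le _
    _ = 2 ^ ℵ₀ := by simp [Cardinal.mk_set]
  have hsmall : ∀ p ∈ P, #p < sNum := by
    rintro p ⟨B, hB, rfl⟩
    have h1 : #(a B) = #{x : F₀ | (x : Set ℕ) ∈ FB F B} :=
      Cardinal.mk_image_eq e.injective
    have h2 : #{x : F₀ | (x : Set ℕ) ∈ FB F B} ≤ #(FB F B) := by
      refine Cardinal.mk_le_of_injective
        (f := fun x => (⟨(x : Set ℕ), x.2⟩ : FB F B)) ?_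
      intro x y hxy
      simpa [Subtype.ext_iff] using hxy
    calc #(a B) = _ := h1
    _ ≤ #(FB F B) := h2
    _ < sNum := hstrong B hB
  have hcover : ∀ X : Set sNum.ord.ToType, #X < sNum → ∃ p ∈ P, X ⊆ p := by
    intro X hX
    set Y : Set (Set ℕ) := (fun x : sNum.ord.ToType => ((e.symm x : F₀) : Set ℕ)) '' X
      with hY
    have hYcard : #Y < sNum := lt_of_le_of_lt Cardinal.mk_image_le hX
    have hYnot : ¬ IsSplittingFamily Y := by
      intro hYsplit
      have : sNum ≤ #Y := csInf_le' ⟨Y, hYsplit, rfl⟩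
      exact absurd this (not_le.mpr hYcard)
    rw [IsSplittingFamily] at hYnot
    push_neg at hYnot
    obtain ⟨B, hBinf, hB⟩ := hYnot
    refine ⟨a B, ⟨B, hBinf, rfl⟩, ?_⟩
    intro x hx
    have hmem : ((e.symm x : F₀) : Set ℕ) ∈ Y := ⟨x, hx, rfl⟩
    have hnsplit : ¬ Splits ((e.symm x : F₀) : Set ℕ) B := hB _ hmem
    have hfin : (B ∩ ((e.symm x : F₀) : Set ℕ)).Finite ∨
        (B \ ((e.symm x : F₀) : Set ℕ)).Finite := by
      rw [Splits] at hnsplit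
      push_neg at hnsplit
      by_cases h1 : (B ∩ ((e.symm x : F₀) : Set ℕ)).Finite
      · exact Or.inl h1
      · exact Or.inr (hnsplit h1)
    have hFB : ((e.symm x : F₀) : Set ℕ) ∈ FB F B := by
      refine ⟨hF₀F (e.symm x).2, ?_⟩
      rcases hfin with h1 | h1
      · right
        have : B \ ((e.symm x : F₀) : Set ℕ)ᶜ = B ∩ ((e.symm x : F₀) : Set ℕ) := by
          ext n; simp
        rw [AlmostSub, this]
        exact h1
      · exact Or.inl h1
    exact ⟨e.symm x, hFB, by simp⟩
  have hcov : covNum sNum sNum sNum ≤ #P := csInf_le' ⟨P, rfl, hsmall, hcover⟩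
  exact absurd (hcov.trans hPcard) (not_le.mpr h)
end

section
/- The weak diamond principle Φ_{ℵ₁} implies 2^{ℵ₀} < 2^{ℵ₁}. -/
open Cardinal

/-- A club subset of the ordinals below κ. -/
def IsClubBelow (C : Set Ordinal) (κ : Ordinal) : Prop :=
  (∀ a < κ, ∃ b ∈ C, a ≤ b ∧ b < κ) ∧
  ∀ a < κ, Order.IsSuccLimit a → (∀ b < a, ∃ x ∈ C, b < x ∧ x < a) → a ∈ C

/-- A stationary subset of the ordinals below κ: it meets every club. -/
def IsStationaryBelow (S : Set Ordinal) (κ : Ordinal) : Prop :=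
  ∀ C : Set Ordinal, IsClubBelow C κ → (S ∩ C ∩ Set.Iio κ).Nonempty

/-- The weak diamond principle Φ_{ℵ₁} of Devlin and Shelah. -/
def WeakDiamond : Prop :=
  ∀ F : (α : Ordinal.{0}) → (Set.Iio α → Bool) → Bool,
    ∃ g : Ordinal.{0} → Bool, ∀ f : Ordinal.{0} → Bool,
      IsStationaryBelow {α | F α (fun i => f i.1) = g α} (Cardinal.aleph 1).ord

theorem weakDiamond_lt_aux (h : WeakDiamond) :
    (2 : Cardinal.{0}) ^ ℵ₀ < 2 ^ aleph 1 := by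
  by_contra hlt
  push_neg at hlt
  -- hlt : 2 ^ aleph 1 ≤ 2 ^ ℵ₀
  set ω₁ : Ordinal := (aleph 1).ord with hω₁
  have hωlt : (Ordinal.omega0 : Ordinal) < ω₁ := by
    rw [hω₁, ← Cardinal.ord_aleph0]
    exact Cardinal.ord_lt_ord.mpr (aleph0_lt_aleph_one)
  -- cardinalities
  have e1 : #(Set.Iio ω₁) = Cardinal.lift.{1,0} (aleph 1) := by
    rw [Ordinal.mk_Iio_ordinal]
    congr 1
    exact Cardinal.card_ord _
  have e2 : #(Set.Iio (Ordinal.omega0)) = Cardinal.lift.{1,0} (ℵ₀ : Cardinal.{0}) := by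
    rw [Ordinal.mk_Iio_ordinal, Ordinal.card_omega0]
  have h1 : #(Set.Iio ω₁ → Bool) = Cardinal.lift.{1,0} ((2 : Cardinal.{0}) ^ aleph 1) := by
    rw [Cardinal.mk_arrow, e1, Cardinal.mk_bool, Cardinal.lift_lift, ← Cardinal.lift_power]
  have h2 : #(Set.Iio (Ordinal.omega0) → Bool)
      = Cardinal.lift.{1,0} ((2 : Cardinal.{0}) ^ (ℵ₀ : Cardinal.{0})) := by
    rw [Cardinal.mk_arrow, e2, Cardinal.mk_bool, Cardinal.lift_lift, ← Cardinal.lift_power]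
  have hle : #(Set.Iio ω₁ → Bool) ≤ #(Set.Iio (Ordinal.omega0) → Bool) := by
    rw [h1, h2]; exact Cardinal.lift_le.mpr hlt
  obtain ⟨φ⟩ := Cardinal.le_def _ _ |>.mp hle
  classical
  -- partial inverse
  let ψ : (Set.Iio (Ordinal.omega0) → Bool) → (Set.Iio ω₁ → Bool) :=
    fun x => if hx : ∃ y, φ y = x then hx.choose else fun _ => false
  have hψφ : ∀ y, ψ (φ y) = y := by
    intro y
    have hx : ∃ y', φ y' = φ y := ⟨y, rfl⟩
    simp only [ψ, dif_pos hx]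
    exact φ.injective hx.choose_spec
  -- define F
  let F : (α : Ordinal.{0}) → (Set.Iio α → Bool) → Bool := fun α s =>
    if hα : Ordinal.omega0 ≤ α ∧ α < ω₁ then
      ! (ψ (fun i => s ⟨i.1, lt_of_lt_of_le i.2 hα.1⟩)) ⟨α, hα.2⟩
    else false
  obtain ⟨g, hg⟩ := h F
  let y : Set.Iio ω₁ → Bool := fun i => g i.1
  let x := φ y
  let f : Ordinal → Bool := fun o => if ho : o < Ordinal.omega0 then x ⟨o, ho⟩ else false
  have hclub : IsClubBelow (Set.Ici (Ordinal.omega0)) ω₁ := by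
    constructor
    · intro a ha
      exact ⟨max a Ordinal.omega0, Set.mem_Ici.mpr (le_max_right _ _), le_max_left _ _, max_lt ha hωlt⟩
    · intro a _ halim _
      exact Ordinal.omega0_le_of_isSuccLimit halim
  obtain ⟨α, ⟨hαS, hαC⟩, hακ⟩ := hg f _ hclub
  have hα : Ordinal.omega0 ≤ α ∧ α < ω₁ := ⟨hαC, hακ⟩
  have hFα : F α (fun i => f i.1) = g α := hαS
  have hrestr : (fun i : Set.Iio Ordinal.omega0 =>
      (fun i : Set.Iio α => f i.1) ⟨i.1, lt_of_lt_of_le i.2 hα.1⟩) = x := by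
    funext i
    show f i.1 = x i
    rw [show f i.1 = x ⟨i.1, i.2⟩ from dif_pos i.2]
  rw [show F α (fun i => f i.1) =
      ! (ψ (fun i => (fun i : Set.Iio α => f i.1) ⟨i.1, lt_of_lt_of_le i.2 hα.1⟩)) ⟨α, hα.2⟩
    from dif_pos hα, hrestr, hψφ] at hFα
  simp only [y] at hFα
  exact Bool.not_ne_self _ hFα

/-- The weak diamond implies 2^ℵ₀ < 2^ℵ₁. -/
theorem weakDiamond_implies_lt (h : WeakDiamond) :
    (2 : Cardinal) ^ ℵ₀ < 2 ^ aleph 1 := by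
  have h0 := weakDiamond_lt_aux h
  have h1 := Cardinal.lift_lt.{0, u_1}.mpr h0
  simpa [Cardinal.lift_power, Cardinal.lift_two, Cardinal.lift_aleph0,
    Cardinal.lift_aleph, Ordinal.lift_one] using h1
end

section
/- If κ is a cardinal with uncountable cofinality and κ < 𝔰, then the positive polarized relation (κ, ω) → (κ, ω)^{1,1}_2 holds: every coloring c : κ × ω → 2 admits A ⊆ κ with |A| = κ and infinite B ⊆ ω on which c is constant. -/
open Cardinal Set

/-- If cf(κ) > ℵ₀ and κ < 𝔰 then (κ,ω) → (κ,ω)^{1,1}_2. -/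
theorem pos_polarized_below_sNum (κ : Cardinal)
    (h1 : ℵ₀ < κ.ord.cof) (h2 : κ < sNum)
    (c : κ.ord.ToType → ℕ → Fin 2) :
    ∃ A : Set κ.ord.ToType, ∃ B : Set ℕ, ∃ i : Fin 2,
      #A = κ ∧ B.Infinite ∧ ∀ a ∈ A, ∀ n ∈ B, c a n = i := by
  have hκinf : ℵ₀ < κ := h1.trans_le (by simpa using Ordinal.cof_le_card κ.ord)
  -- The family of sections
  set F : Set (Set ℕ) := Set.range (fun a => {n | c a n = 1}) with hF
  have hFcard : #F < sNum := by
    refine lt_of_le_of_lt ?_ h2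
    have := Cardinal.mk_range_le (f := fun a : κ.ord.ToType => {n | c a n = 1})
    simpa [hF, Cardinal.mk_toType] using this
  -- F is not splitting
  have hnotsplit : ¬ IsSplittingFamily F := by
    intro hsplit
    have : sNum ≤ #F := csInf_le' ⟨F, hsplit, rfl⟩
    exact absurd this (not_le.2 hFcard)
  rw [IsSplittingFamily] at hnotsplit
  push_neg at hnotsplit
  obtain ⟨B, hBinf, hB⟩ := hnotsplit
  -- For each a, B is not split by S_a
  have key : ∀ a : κ.ord.ToType, ∃ i : Fin 2, ∃ N : ℕ,
      ∀ n ∈ B, N ≤ n → c a n = i := by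
    intro a
    have := hB {n | c a n = 1} ⟨a, rfl⟩
    rw [Splits, not_and_or] at this
    rcases this with h | h
    · rw [Set.not_infinite] at h
      obtain ⟨N, hN⟩ := h.bddAbove
      refine ⟨0, N + 1, fun n hn hNn => ?_⟩
      by_contra hne
      have h1' : c a n = 1 := by omega
      have : n ∈ B ∩ {n | c a n = 1} := ⟨hn, h1'⟩
      exact absurd (hN this) (by omega)
    · rw [Set.not_infinite] at h
      obtain ⟨N, hN⟩ := h.bddAbove
      refine ⟨1, N + 1, fun n hn hNn => ?_⟩
      by_contra hne
      have h1' : ¬ (n ∈ {n | c a n = 1}) := by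
        simp only [Set.mem_setOf_eq]
        omega
      have : n ∈ B \ {n | c a n = 1} := ⟨hn, h1'⟩
      exact absurd (hN this) (by omega)
  choose i N hiN using key
  -- find a fiber of size κ
  set f : κ.ord.ToType → Fin 2 × ℕ := fun a => (i a, N a) with hf
  have hκeq : #κ.ord.ToType = κ := by simp [Cardinal.mk_toType]
  have : ∃ p : Fin 2 × ℕ, #(f ⁻¹' {p}) = κ := by
    by_contra hcon
    push_neg at hcon
    have hlt : ∀ p : Fin 2 × ℕ, #(f ⁻¹' {p}) < κ := fun p =>
      lt_of_le_of_ne ((Cardinal.mk_set_le _).trans_eq hκeq) (hcon p)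
    have hsup : (⨆ p : Fin 2 × ℕ, #(f ⁻¹' {p})) < κ :=
      Ordinal.iSup_lt (by simpa using h1) hlt
    have hcover : (Set.univ : Set κ.ord.ToType) = ⋃ p, f ⁻¹' {p} := by
      ext a; simp
    have := Cardinal.mk_iUnion_le (fun p : Fin 2 × ℕ => f ⁻¹' {p})
    rw [← hcover] at this
    rw [Cardinal.mk_univ, hκeq] at this
    have hmul : #(Fin 2 × ℕ) * (⨆ p : Fin 2 × ℕ, #(f ⁻¹' {p})) < κ :=
      Cardinal.mul_lt_of_lt hκinf.le (by simpa using hκinf) hsup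
    exact absurd (this.trans_lt hmul) (lt_irrefl κ)
  obtain ⟨⟨i₀, N₀⟩, hp⟩ := this
  refine ⟨f ⁻¹' {(i₀, N₀)}, B ∩ {n | N₀ ≤ n}, i₀, hp, ?_, ?_⟩
  · have : (B ∩ {n | N₀ ≤ n}) = B \ {n | n < N₀} := by
      ext n; simp [Nat.not_lt]
    rw [this]
    exact hBinf.diff (Set.finite_Iio N₀)
  · rintro a ha n ⟨hnB, hnN⟩
    have hmem := ha
    simp only [Set.mem_preimage, Set.mem_singleton_iff, hf, Prod.mk.injEq] at hmem
    rw [← hmem.1]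
    exact hiN a n hnB (hmem.2 ▸ hnN)
end

section
/- If F = {S_α : α < 𝔰} is a strong splitting family, λ is a singular cardinal with λ = 𝔰 = 2^{ℵ₀}, and ⟨ξ_γ : γ < cf(λ)⟩ is increasing cofinal in λ, then there exists H ⊆ λ with |H| = cf(λ) such that for every infinite B ⊆ ω, H ⊄ H_B, where H_B = {α < 𝔰 : B ⊆* S_α or B ⊆* ω \ S_α}. -/
open Cardinal Set

/-- Diagonal selection: if {S_α : α < 𝔰} is a strong splitting family and
𝔰 = 𝔠 is singular, then there is H ⊆ 𝔰 of size cf(𝔰) not contained in any H_B. -/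
theorem exists_H_not_subset_HB (S : sNum.ord.ToType → Set ℕ)
    (hsplit : ∀ B : Set ℕ, B.Infinite → ∃ α, Splits (S α) B)
    (hstrong : ∀ B : Set ℕ, B.Infinite →
      #{α | AlmostSub B (S α) ∨ AlmostSub B (S α)ᶜ} < sNum)
    (hsing : sNum.ord.cof < sNum) (hc : sNum = 2 ^ ℵ₀)
    (ξ : (sNum.ord.cof).ord.ToType → sNum.ord.ToType)
    (hmono : StrictMono ξ) (hcof : ∀ a, ∃ γ, a ≤ ξ γ) :
    ∃ H : Set sNum.ord.ToType, #H = sNum.ord.cof ∧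
      ∀ B : Set ℕ, B.Infinite →
        ¬ H ⊆ {α | AlmostSub B (S α) ∨ AlmostSub B (S α)ᶜ} := by
  classical
  haveI hwo : IsWellOrder sNum.ord.ToType (· < ·) := isWellOrder_lt
  have hα : #sNum.ord.ToType = sNum := by
    rw [Cardinal.mk_toType, Cardinal.card_ord]
  have haleph : ℵ₀ < sNum := hc ▸ Cardinal.cantor ℵ₀
  -- injection from infinite subsets of ℕ into toType
  have hinj : ∃ e : {B : Set ℕ // B.Infinite} → sNum.ord.ToType, Function.Injective e := by
    have h1 : #{B : Set ℕ // B.Infinite} ≤ #sNum.ord.ToType := by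
      rw [hα, hc]
      calc #{B : Set ℕ // B.Infinite} ≤ #(Set ℕ) := Cardinal.mk_subtype_le _
        _ = 2 ^ ℵ₀ := by rw [Cardinal.mk_set, Cardinal.mk_nat]
    obtain ⟨f⟩ := Cardinal.le_def _ _ |>.1 h1
    exact ⟨f, f.injective⟩
  obtain ⟨e, he⟩ := hinj
  set HB' : {B : Set ℕ // B.Infinite} → Set sNum.ord.ToType :=
    fun B => {α | AlmostSub B.1 (S α) ∨ AlmostSub B.1 (S α)ᶜ} with hHB'
  set cγ : (sNum.ord.cof).ord.ToType → Cardinal :=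
    fun γ => #(Iic (ξ γ)) ⊔ ℵ₀ with hcγ
  have hIic : ∀ x : sNum.ord.ToType, #(Iic x) < sNum := by
    intro x
    have h1 : #(Iio x) < sNum := Cardinal.mk_Iio_ord_toType x
    have : #(Iic x) ≤ #(Iio x) + 1 := by
      rw [← Set.Iio_insert]; exact Cardinal.mk_insert_le
    exact this.trans_lt (Cardinal.add_lt_of_lt haleph.le h1 (one_lt_aleph0.trans haleph))
  have hcγlt : ∀ γ, cγ γ < sNum := fun γ => max_lt (hIic _) haleph
  set A : (sNum.ord.cof).ord.ToType → Set sNum.ord.ToType :=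
    fun γ => (⋃ B : {B : {B : Set ℕ // B.Infinite} // e B ≤ ξ γ ∧ #(HB' B) ≤ cγ γ},
      HB' (B.1 : {B : Set ℕ // B.Infinite})) ∪ Iic (ξ γ) with hA
  have hAcard : ∀ γ, #(A γ) < sNum := by
    intro γ
    have hidx : #{B : {B : Set ℕ // B.Infinite} // e B ≤ ξ γ ∧ #(HB' B) ≤ cγ γ} ≤ cγ γ := by
      have : Function.Injective (fun B : {B : {B : Set ℕ // B.Infinite} //
          e B ≤ ξ γ ∧ #(HB' B) ≤ cγ γ} => (⟨e B.1, B.2.1⟩ : Iic (ξ γ))) := by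
        intro a b hab
        exact Subtype.ext (he (by simpa using congrArg Subtype.val hab))
      exact le_max_left _ _ |>.trans' (Cardinal.mk_le_of_injective this)
    have hU : #(⋃ B : {B : {B : Set ℕ // B.Infinite} // e B ≤ ξ γ ∧ #(HB' B) ≤ cγ γ},
        HB' (B.1 : {B : Set ℕ // B.Infinite})) ≤ cγ γ := by
      refine (Cardinal.mk_iUnion_le _).trans ?_
      have hsup : ⨆ B : {B : {B : Set ℕ // B.Infinite} // e B ≤ ξ γ ∧ #(HB' B) ≤ cγ γ},
          #(HB' (B.1 : {B : Set ℕ // B.Infinite})) ≤ cγ γ := by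
        apply ciSup_le'
        intro B; exact B.2.2
      calc _ ≤ cγ γ * cγ γ := mul_le_mul' hidx hsup
        _ = cγ γ := Cardinal.mul_eq_self (le_max_right _ _)
    calc #(A γ) ≤ _ + _ := Cardinal.mk_union_le _ _
      _ ≤ cγ γ + cγ γ := add_le_add hU (le_max_left _ _)
      _ < sNum := Cardinal.add_lt_of_lt haleph.le (hcγlt γ) (hcγlt γ)
  have hex : ∀ γ, ∃ a, a ∉ A γ := by
    intro γ
    by_contra hcon
    push_neg at hcon
    have huniv : A γ = Set.univ := eq_univ_of_forall hcon
    have h2 := hAcard γ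
    rw [huniv, Cardinal.mk_univ, hα] at h2
    exact lt_irrefl _ h2
  choose h hh using hex
  refine ⟨range h, ?_, ?_⟩
  · apply le_antisymm
    · calc #(range h) ≤ #((sNum.ord.cof).ord.ToType) := Cardinal.mk_range_le
        _ = sNum.ord.cof := by rw [Cardinal.mk_toType, Cardinal.card_ord]
    · have hunb : Set.Unbounded (· < ·) (range h) := by
        intro a
        obtain ⟨γ, hγ⟩ := hcof a
        refine ⟨h γ, mem_range_self γ, ?_⟩
        have : h γ ∉ Iic (ξ γ) := fun hmem => hh γ (Or.inr hmem)
        have hlt : ξ γ < h γ := lt_of_not_ge this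
        exact not_lt.2 (hγ.trans hlt.le)
      have := Order.cof_le (s := range h)
        (fun a => let ⟨b, hb, hab⟩ := hunb a; ⟨b, hb, not_lt.1 hab⟩)
      rwa [Ordinal.cof_toType] at this
  · intro B hB hsub
    set Bs : {B : Set ℕ // B.Infinite} := ⟨B, hB⟩ with hBs
    have hcard : #(HB' Bs) < sNum := hstrong B hB
    -- find x with #(Iio x) = #(HB' Bs)
    have hlt : (#(HB' Bs)).ord < Ordinal.type ((· < ·) :
        sNum.ord.ToType → sNum.ord.ToType → Prop) := by
      rw [Ordinal.type_toType]
      exact Cardinal.ord_lt_ord.2 hcard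
    obtain ⟨x, hx⟩ := Ordinal.typein_surj _ hlt
    have hxcard : #(Iio x) = #(HB' Bs) := by
      have := Ordinal.card_typein x (r := ((· < ·) :
        sNum.ord.ToType → sNum.ord.ToType → Prop))
      rw [hx, Cardinal.card_ord] at this
      rw [this]
      exact Cardinal.mk_congr ((OrderIso.setCongr (Iio x) {y | y < x} rfl).toEquiv)
    obtain ⟨γ, hγ⟩ := hcof (max x (e Bs))
    have h1 : e Bs ≤ ξ γ := (le_max_right _ _).trans hγ
    have h2 : #(HB' Bs) ≤ cγ γ := by
      rw [← hxcard]
      refine le_max_left _ _ |>.trans' (Cardinal.mk_le_mk_of_subset ?_)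
      intro y hy
      exact hy.le.trans ((le_max_left x (e Bs)).trans hγ)
    have hmem : h γ ∈ A γ := by
      apply Or.inl
      exact mem_iUnion.2 ⟨⟨Bs, h1, h2⟩, hsub (mem_range_self γ)⟩
    exact hh γ hmem
end

section
/- The splitting number 𝔰 has uncountable cofinality. -/
open Cardinal Set

/-! ### Auxiliary lemmas -/

/-- Transfer of non-splitting along almost-inclusion. -/
lemma not_splits_of_almost {C B S : Set ℕ} (h : (C \ B).Finite)
    (hB : ¬ Splits S B) : ¬ Splits S C := by
  rw [Splits, not_and_or, Set.not_infinite, Set.not_infinite] at hB ⊢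
  rcases hB with hB | hB
  · left
    have hsub : C ∩ S ⊆ (B ∩ S) ∪ (C \ B) := by
      intro x hx
      by_cases hxB : x ∈ B
      · exact Or.inl ⟨hxB, hx.2⟩
      · exact Or.inr ⟨hx.1, hxB⟩
    exact (hB.union h).subset hsub
  · right
    have hsub : C \ S ⊆ (B \ S) ∪ (C \ B) := by
      intro x hx
      by_cases hxB : x ∈ B
      · exact Or.inl ⟨hxB, hx.2⟩
      · exact Or.inr ⟨hx.1, hxB⟩
    exact (hB.union h).subset hsub

/-- Build a decreasing chain of infinite sets satisfying the given step property. -/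
lemma chain_build (Q : ℕ → Set ℕ → Prop)
    (step : ∀ n (A : Set ℕ), A.Infinite → ∃ B, B ⊆ A ∧ B.Infinite ∧ Q n B) :
    ∃ B : ℕ → Set ℕ, (∀ n, (B n).Infinite) ∧ (∀ n, B (n+1) ⊆ B n) ∧ ∀ n, Q n (B n) := by
  choose f hf1 hf2 hf3 using step
  let D : ℕ → {A : Set ℕ // A.Infinite} := fun n =>
    Nat.rec ⟨f 0 univ infinite_univ, hf2 0 univ infinite_univ⟩
      (fun n p => ⟨f (n+1) p.1 p.2, hf2 (n+1) p.1 p.2⟩) n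
  refine ⟨fun n => (D n).1, fun n => (D n).2, fun n => ?_, fun n => ?_⟩
  · exact hf1 (n+1) (D n).1 (D n).2
  · cases n with
    | zero => exact hf3 0 univ infinite_univ
    | succ n => exact hf3 (n+1) (D n).1 (D n).2

/-- A pseudo-intersection of a decreasing chain of infinite sets. -/
lemma chain_pseudo (B : ℕ → Set ℕ) (hinf : ∀ n, (B n).Infinite)
    (hdec : ∀ n, B (n+1) ⊆ B n) :
    ∃ C : Set ℕ, C.Infinite ∧ ∀ n, (C \ B n).Finite := by
  have hanti : ∀ {m n : ℕ}, n ≤ m → B m ⊆ B n := by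
    intro m n h
    induction h with
    | refl => exact subset_rfl
    | step _ ih => exact fun x hx => ih (hdec _ hx)
  choose g hg1 hg2 using fun n (a : ℕ) => (hinf n).exists_gt a
  let c : ℕ → ℕ := fun n => Nat.rec (g 0 0) (fun n x => g (n+1) x) n
  have hcmem : ∀ n, c n ∈ B n := by
    intro n; cases n with
    | zero => exact hg1 0 0
    | succ n => exact hg1 (n+1) (c n)
  have hmono : StrictMono c := strictMono_nat_of_lt_succ fun n => hg2 (n+1) (c n)
  refine ⟨Set.range c, Set.infinite_range_of_injective hmono.injective, fun n => ?_⟩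
  have hsub : Set.range c \ B n ⊆ c '' (Set.Iio n) := by
    intro x hx
    rw [Set.mem_diff] at hx
    obtain ⟨⟨m, rfl⟩, hxB⟩ := hx
    rcases lt_or_ge m n with h | h
    · exact ⟨m, h, rfl⟩
    · exact absurd (hanti h (hcmem m)) hxB
  exact ((Set.finite_Iio n).image c).subset hsub

lemma not_splitting_of_lt_s17 {G : Set (Set ℕ)} (h : #G < sNum) : ¬ IsSplittingFamily G := by
  intro hs
  have hmem : #G ∈ { κ | ∃ F : Set (Set ℕ), IsSplittingFamily F ∧ #F = κ } := ⟨G, hs, rfl⟩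
  have hle : sNum ≤ #G := csInf_le' hmem
  exact absurd hle (not_le.2 h)

/-- Relativized non-splitting step for families of size below `𝔰`. -/
lemma small_step (G : Set (Set ℕ)) (hG : #G < sNum) (A : Set ℕ) (hA : A.Infinite) :
    ∃ B, B ⊆ A ∧ B.Infinite ∧ ∀ S ∈ G, ¬ Splits S B := by
  have hmkA : (#ℕ) = #A := by
    rw [Cardinal.mk_nat]
    have := hA.to_subtype
    exact (le_antisymm Cardinal.mk_le_aleph0 (Cardinal.aleph0_le_mk _)).symm
  obtain ⟨e⟩ := Cardinal.eq.mp hmkA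
  set j : ℕ → ℕ := fun n => (e n : ℕ) with hj
  have hjinj : Function.Injective j := Subtype.coe_injective.comp e.injective
  have hG'lt : #((fun S => {n | j n ∈ S}) '' G) < sNum :=
    lt_of_le_of_lt Cardinal.mk_image_le hG
  have hns := not_splitting_of_lt_s17 hG'lt
  rw [IsSplittingFamily] at hns; push_neg at hns
  obtain ⟨C, hCinf, hC⟩ := hns
  refine ⟨j '' C, ?_, hCinf.image hjinj.injOn, fun S hS => ?_⟩
  · rintro x ⟨n, _, rfl⟩; exact (e n).2
  · have hT := hC {n | j n ∈ S} ⟨S, hS, rfl⟩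
    have h1 : j '' C ∩ S = j '' (C ∩ {n | j n ∈ S}) := by
      ext x; constructor
      · rintro ⟨⟨n, hn, rfl⟩, hxS⟩; exact ⟨n, ⟨hn, hxS⟩, rfl⟩
      · rintro ⟨n, ⟨hn, hnS⟩, rfl⟩; exact ⟨⟨n, hn, rfl⟩, hnS⟩
    have h2 : j '' C \ S = j '' (C \ {n | j n ∈ S}) := by
      ext x; constructor
      · rintro ⟨⟨n, hn, rfl⟩, hxS⟩; exact ⟨n, ⟨hn, hxS⟩, rfl⟩
      · rintro ⟨n, ⟨hn, hnS⟩, rfl⟩; exact ⟨⟨n, hn, rfl⟩, hnS⟩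
    rw [Splits, not_and_or, Set.not_infinite, Set.not_infinite] at hT ⊢
    rw [h1, h2]
    rcases hT with h | h
    · exact Or.inl (h.image j)
    · exact Or.inr (h.image j)

/-- A countable union of families, each admitting a non-split relativized set,
is not a splitting family. -/
lemma union_not_splitting (G : ℕ → Set (Set ℕ))
    (step : ∀ n (A : Set ℕ), A.Infinite →
      ∃ B, B ⊆ A ∧ B.Infinite ∧ ∀ S ∈ G n, ¬ Splits S B) :
    ¬ IsSplittingFamily (⋃ n, G n) := by
  obtain ⟨B, hinf, hdec, hQ⟩ := chain_build (fun n B => ∀ S ∈ G n, ¬ Splits S B) step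
  obtain ⟨C, hC, hCB⟩ := chain_pseudo B hinf hdec
  intro hsp
  obtain ⟨S, hS, hsplit⟩ := hsp C hC
  obtain ⟨n, hSn⟩ := Set.mem_iUnion.mp hS
  exact not_splits_of_almost (hCB n) (hQ n S hSn) hsplit

/-- One-set step: below any infinite set there is an infinite set not split by `S₀`. -/
lemma one_step (S₀ : Set ℕ) (A : Set ℕ) (hA : A.Infinite) :
    ∃ B, B ⊆ A ∧ B.Infinite ∧ ¬ Splits S₀ B := by
  by_cases h : (A ∩ S₀).Infinite
  · refine ⟨A ∩ S₀, Set.inter_subset_left, h, fun hsp => ?_⟩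
    have : (A ∩ S₀) \ S₀ = ∅ := by ext x; simp +contextual [Set.mem_diff]
    exact absurd (this ▸ hsp.2) (by simp)
  · have hAd : (A \ S₀).Infinite := by
      by_contra hfin
      rw [Set.not_infinite] at h hfin
      exact hA ((h.union hfin).subset (fun x hx => by
        by_cases hxS : x ∈ S₀
        · exact Or.inl ⟨hx, hxS⟩
        · exact Or.inr ⟨hx, hxS⟩))
    refine ⟨A \ S₀, Set.diff_subset, hAd, fun hsp => ?_⟩
    have : (A \ S₀) ∩ S₀ = ∅ := by ext x; simp +contextual [Set.mem_diff]
    exact absurd (this ▸ hsp.1) (by simp)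

/-- Every infinite set is split by some set. -/
lemma exists_splits (B : Set ℕ) (hB : B.Infinite) : ∃ S, Splits S B := by
  have hmkB : (#ℕ) = #B := by
    rw [Cardinal.mk_nat]
    have := hB.to_subtype
    exact (le_antisymm Cardinal.mk_le_aleph0 (Cardinal.aleph0_le_mk _)).symm
  obtain ⟨e⟩ := Cardinal.eq.mp hmkB
  set j : ℕ → ℕ := fun n => (e n : ℕ) with hj
  have hjinj : Function.Injective j := Subtype.coe_injective.comp e.injective
  refine ⟨Set.range (fun n => j (2*n)), ?_, ?_⟩
  · have hinf : (Set.range fun n => j (2*n)).Infinite :=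
      Set.infinite_range_of_injective (hjinj.comp fun a b hab => by omega)
    refine hinf.mono ?_
    rintro x ⟨n, rfl⟩
    exact ⟨(e (2*n)).2, ⟨n, rfl⟩⟩
  · have hinf : (Set.range fun n => j (2*n+1)).Infinite :=
      Set.infinite_range_of_injective (hjinj.comp fun a b hab => by omega)
    refine hinf.mono ?_
    rintro x ⟨n, rfl⟩
    refine ⟨(e (2*n+1)).2, ?_⟩
    rintro ⟨m, hm⟩
    have : (2*m : ℕ) = 2*n+1 := hjinj hm
    omega

lemma sNum_mem : ∃ F : Set (Set ℕ), IsSplittingFamily F ∧ #F = sNum := by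
  have hne : {κ | ∃ F : Set (Set ℕ), IsSplittingFamily F ∧ #F = κ}.Nonempty := by
    refine ⟨#(univ : Set (Set ℕ)), univ, fun B hB => ?_, rfl⟩
    obtain ⟨S, hS⟩ := exists_splits B hB
    exact ⟨S, Set.mem_univ S, hS⟩
  exact csInf_mem hne

/-- The splitting number has uncountable cofinality. -/
theorem sNum_cof_uncountable : ℵ₀ < sNum.ord.cof := by
  by_contra hcof
  push_neg at hcof
  obtain ⟨F, hF, hFc⟩ := sNum_mem
  have hs0 := aleph0_lt_sNum
  have hne : sNum.ord ≠ 0 := by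
    intro h0
    have hc := congrArg Ordinal.card h0
    rw [Cardinal.card_ord] at hc
    rw [hc] at hs0
    simp at hs0
  haveI : Nonempty sNum.ord.ToType := Ordinal.toType_nonempty_iff_ne_zero.2 hne
  haveI hwo : IsWellOrder sNum.ord.ToType (· < ·) := isWellOrder_lt
  obtain ⟨Sb, hSbU, hSbc⟩ := Order.exists_cof_eq (α := sNum.ord.ToType)
  rw [Ordinal.cof_toType] at hSbc
  have hSbcount : Sb.Countable := by
    rw [← Set.countable_coe_iff, ← Cardinal.mk_le_aleph0_iff, hSbc]
    exact hcof
  have hSbne : Sb.Nonempty := by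
    obtain ⟨b, hb, _⟩ := hSbU (Classical.arbitrary _)
    exact ⟨b, hb⟩
  obtain ⟨f, hf⟩ := hSbcount.exists_eq_range hSbne
  have hFα : #F = #(sNum.ord.ToType) := by
    rw [Cardinal.mk_toType, Cardinal.card_ord, hFc]
  obtain ⟨e⟩ := Cardinal.eq.mp hFα
  set G : ℕ → Set (Set ℕ) := fun n => {T | ∃ h : T ∈ F, e ⟨T, h⟩ ≤ f n} with hGdef
  have hGsmall : ∀ n, #(G n) < sNum := by
    intro n
    have hinj : #(G n) ≤ #(Set.Iic (f n)) := by
      refine Cardinal.mk_le_of_injective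
        (f := fun T => ⟨e ⟨T.1, T.2.choose⟩, T.2.choose_spec⟩) ?_
      intro a b hab
      have h1 : e ⟨a.1, a.2.choose⟩ = e ⟨b.1, b.2.choose⟩ := congrArg Subtype.val hab
      have h2 := e.injective h1
      exact Subtype.ext (Subtype.mk_eq_mk.mp h2)
    have hIic : #(Set.Iic (f n)) < sNum := by
      rw [← Set.Iio_insert]
      calc #(insert (f n) (Set.Iio (f n)) : Set _) ≤ #(Set.Iio (f n)) + 1 :=
            Cardinal.mk_insert_le
        _ < sNum := Cardinal.add_lt_of_lt hs0.le (Cardinal.mk_Iio_ord_toType _)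
            (lt_trans Cardinal.one_lt_aleph0 hs0)
    exact hinj.trans_lt hIic
  have hcover : (⋃ n, G n) = F := by
    apply Set.Subset.antisymm
    · intro T hT
      obtain ⟨n, hn⟩ := Set.mem_iUnion.mp hT
      exact hn.choose
    · intro T hT
      obtain ⟨b, hbS, hble⟩ := hSbU (e ⟨T, hT⟩)
      rw [hf] at hbS
      obtain ⟨n, rfl⟩ := hbS
      exact Set.mem_iUnion.mpr ⟨n, hT, hble⟩
  have hns := union_not_splitting G (fun n A hA => small_step (G n) (hGsmall n) A hA)
  rw [hcover] at hns
  exact hns hF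
end

section
/- Suppose F : (binary sequences of length < ω₁) → 2 witnesses a failure instance and 2^{ℵ₀} = 2^{ℵ₁}. Then Φ_{ℵ₁} fails: there exists F : {f ↾ α : f : ω₁ → 2, α < ω₁} → 2 such that for every g : ω₁ → 2 there is f : ω₁ → 2 with {α < ω₁ : F(f ↾ α) = g(α)} non-stationary. -/
open Cardinal

theorem weakDiamondAux_down.{u} (h : (2:Cardinal.{u})^ℵ₀ = 2 ^ aleph 1) :
    (2:Cardinal.{0})^ℵ₀ = 2 ^ aleph 1 := by
  rw [← Cardinal.lift_inj.{0,u}]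
  simp only [Cardinal.lift_power, Cardinal.lift_aleph0, Cardinal.lift_aleph,
    Cardinal.lift_ofNat, Ordinal.lift_one]
  exact h

theorem weakDiamondAux_up.{u} (h : (2:Cardinal.{0})^ℵ₀ = 2 ^ aleph 1) :
    (2:Cardinal.{u})^ℵ₀ = 2 ^ aleph 1 := by
  have := congrArg Cardinal.lift.{u,0} h
  simpa only [Cardinal.lift_power, Cardinal.lift_aleph0, Cardinal.lift_aleph,
    Cardinal.lift_ofNat, Ordinal.lift_one] using this

/-- If 2^ℵ₀ = 2^ℵ₁ then the weak diamond Φ_{ℵ₁} fails. -/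
theorem continuum_eq_implies_not_weakDiamond
    (h : (2 : Cardinal) ^ ℵ₀ = 2 ^ aleph 1) :
    ∃ F : (α : Ordinal.{0}) → (Set.Iio α → Bool) → Bool,
      ∀ g : Ordinal.{0} → Bool, ∃ f : Ordinal.{0} → Bool,
        ¬ IsStationaryBelow {α | F α (fun i => f i.1) = g α}
          (Cardinal.aleph 1).ord := by
  have hIio : ∀ o : Ordinal.{0},
      #(Set.Iio o → Bool) = (2 : Cardinal.{1}) ^ Cardinal.lift.{1} o.card := by
    intro o
    rw [Cardinal.mk_arrow, Ordinal.mk_Iio_ordinal]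
    simp
  have hcard : #(Set.Iio (Cardinal.aleph 1).ord → Bool) ≤ #(Set.Iio Ordinal.omega0 → Bool) := by
    rw [hIio, hIio, Cardinal.card_ord, Ordinal.card_omega0]
    have h1 : (2:Cardinal.{1})^ℵ₀ = 2 ^ aleph 1 := weakDiamondAux_up (weakDiamondAux_down h)
    simp only [Cardinal.lift_aleph0, Cardinal.lift_aleph, Ordinal.lift_one]
    exact h1.ge
  obtain ⟨e⟩ := Cardinal.le_def _ _ |>.mp hcard
  classical
  refine ⟨fun α s =>
    if hα : Ordinal.omega0 ≤ α then
      (if hr : ∃ g : Set.Iio (Cardinal.aleph 1).ord → Bool,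
          e g = fun i : Set.Iio Ordinal.omega0 => s ⟨i.1, lt_of_lt_of_le i.2 hα⟩ then
        (if hκ : α < (Cardinal.aleph 1).ord then ! hr.choose ⟨α, hκ⟩ else false)
      else false)
    else false, ?_⟩
  intro g
  set gr : Set.Iio (Cardinal.aleph 1).ord → Bool := fun i => g i.1 with hgr
  refine ⟨fun β => if hβ : β < Ordinal.omega0 then e gr ⟨β, hβ⟩ else false, ?_⟩
  intro hstat
  have hωκ : Ordinal.omega0 < (Cardinal.aleph 1).ord := by
    rw [Cardinal.lt_ord]; simp [Cardinal.aleph0_lt_aleph_one]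
  have hclub : IsClubBelow {x | Ordinal.omega0 ≤ x} (Cardinal.aleph 1).ord := by
    constructor
    · intro a ha
      refine ⟨max a Ordinal.omega0, ?_, le_max_left _ _, max_lt ha hωκ⟩
      exact le_max_right a Ordinal.omega0
    · intro a _ hlim _
      exact Ordinal.omega0_le_of_isSuccLimit hlim
  obtain ⟨α, ⟨hαS, hαC⟩, hακ⟩ := hstat _ hclub
  have hα : Ordinal.omega0 ≤ α := hαC
  have hακ' : α < (Cardinal.aleph 1).ord := hακ
  simp only [Set.mem_setOf_eq] at hαS
  rw [dif_pos hα] at hαS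
  have hr : ∃ g' : Set.Iio (Cardinal.aleph 1).ord → Bool,
      e g' = fun i : Set.Iio Ordinal.omega0 =>
        (fun j : Set.Iio α => (fun β => if hβ : β < Ordinal.omega0 then e gr ⟨β, hβ⟩ else false) j.1)
          ⟨i.1, lt_of_lt_of_le i.2 hα⟩ := by
    refine ⟨gr, ?_⟩
    funext i
    obtain ⟨i, hi⟩ := i
    show e gr ⟨i, hi⟩ = if h2 : i < Ordinal.omega0 then e gr ⟨i, h2⟩ else false
    rw [dif_pos (show i < Ordinal.omega0 from hi)]
  rw [dif_pos hr, dif_pos hακ'] at hαS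
  have hchoose : hr.choose = gr := by
    apply e.injective
    rw [hr.choose_spec]
    funext i
    obtain ⟨i, hi⟩ := i
    show (if h2 : i < Ordinal.omega0 then e gr ⟨i, h2⟩ else false) = e gr ⟨i, hi⟩
    rw [dif_pos (show i < Ordinal.omega0 from hi)]
  rw [hchoose] at hαS
  simp [hgr] at hαS
end
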